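/- arXiv:1601.07812 — 5 statements merged into one kernel-verified Lean document; each statement's English description precedes it below -/
import Mathlib

section
/- The maximal order of an abelian subgroup of the symmetric group S_n, for n = 3k, is 3^k, and any abelian subgroup attaining this order is isomorphic to (Z/3)^k. -/
/-!
A commutative group acting faithfully is determined by where it sends one point of each orbit,
since two commuting elements that agree at a point agree on its whole orbit. Hence an abelian
subgroup of `S_n` has order at most the product of its orbit sizes, which sum to `n`. As
`m ^ 3 ≤ 3 ^ m` with equality only for `m = 3`, for `n = 3k` such a product is at most `3 ^ k`,
with equality only when every orbit has size `3`. Then every point stabilizer has index `3`, so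
`g ^ 3` fixes every point: the group is an `𝔽₃`-vector space of dimension `k`. Conversely
`(ℤ/3)^k` acts faithfully on `k` disjoint copies of `ℤ/3` by translation.
-/

theorem Nat.pow_three_lt_three_pow {m : ℕ} (hm : m ≠ 3) : m ^ 3 < 3 ^ m := by
  induction m with
  | zero => norm_num
  | succ m ih =>
    rcases Nat.lt_or_ge m 4 with hm4 | hm4
    · interval_cases m <;> simp_all
    · have ih := ih (by omega)
      calc (m + 1) ^ 3 ≤ 3 * m ^ 3 := by nlinarith [sq_nonneg m]
        _ < 3 * 3 ^ m := by omega
        _ = 3 ^ (m + 1) := by ring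

theorem Nat.pow_three_le_three_pow (m : ℕ) : m ^ 3 ≤ 3 ^ m := by
  rcases eq_or_ne m 3 with rfl | hm
  · rfl
  · exact (pow_three_lt_three_pow hm).le

namespace Finset

variable {ι : Type*} {s : Finset ι} {f : ι → ℕ}

theorem prod_pow_three_le_three_pow_sum (s : Finset ι) (f : ι → ℕ) :
    (∏ i ∈ s, f i) ^ 3 ≤ 3 ^ ∑ i ∈ s, f i := by
  rw [← prod_pow, ← prod_pow_eq_pow_sum]
  exact prod_le_prod' fun i _ => Nat.pow_three_le_three_pow (f i)

theorem eq_three_of_prod_pow_three_eq_three_pow_sum (hf : ∀ i ∈ s, 0 < f i)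
    (h : (∏ i ∈ s, f i) ^ 3 = 3 ^ ∑ i ∈ s, f i) : ∀ i ∈ s, f i = 3 := by
  by_contra! ⟨i, hi, hne⟩
  rw [← prod_pow, ← prod_pow_eq_pow_sum] at h
  exact h.not_lt (prod_lt_prod (fun j hj => pow_pos (hf j hj) 3)
    (fun j _ => Nat.pow_three_le_three_pow (f j)) ⟨i, hi, Nat.pow_three_lt_three_pow hne⟩)

end Finset

namespace MulAction

theorem sum_card_orbitRel_quotient_orbit {G α : Type*} [Group G] [MulAction G α] [Finite α]
    [Fintype (orbitRel.Quotient G α)] :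
    ∑ ω : orbitRel.Quotient G α, Nat.card ω.orbit = Nat.card α := by
  rw [Nat.card_congr (selfEquivSigmaOrbits' G α), Nat.card_sigma]

variable {G α : Type*} [CommGroup G] [MulAction G α]

theorem smul_eq_smul_of_mem_orbit {g h : G} {x y : α} (hy : y ∈ orbit G x)
    (hx : g • x = h • x) : g • y = h • y := by
  obtain ⟨m, rfl⟩ := hy
  rw [smul_smul, mul_comm, mul_smul, hx, smul_smul, mul_comm, mul_smul]

variable [FaithfulSMul G α]

theorem injective_smul_orbitRel_quotient_out :
    Function.Injective fun (g : G) (ω : orbitRel.Quotient G α) =>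
      g • (⟨ω.out, orbitRel.Quotient.mem_orbit.mpr ω.out_eq'⟩ : ω.orbit) := by
  intro g h hgh
  refine FaithfulSMul.eq_of_smul_eq_smul (α := α) fun x => ?_
  set ω : orbitRel.Quotient G α := Quotient.mk'' x
  have hx : x ∈ orbit G ω.out := mem_orbit_symm.mp (orbitRel.Quotient.mem_orbit.mpr ω.out_eq')
  exact smul_eq_smul_of_mem_orbit hx (congrArg Subtype.val (congrFun hgh ω))

theorem card_le_prod_card_orbitRel_quotient_orbit [Finite α] [Fintype (orbitRel.Quotient G α)] :
    Nat.card G ≤ ∏ ω : orbitRel.Quotient G α, Nat.card ω.orbit := by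
  rw [← Nat.card_pi]
  exact Nat.card_le_card_of_injective _ injective_smul_orbitRel_quotient_out

theorem card_pow_three_le_three_pow_card [Finite α] : Nat.card G ^ 3 ≤ 3 ^ Nat.card α := by
  let := Fintype.ofFinite (orbitRel.Quotient G α)
  rw [← sum_card_orbitRel_quotient_orbit (G := G) (α := α)]
  exact (Nat.pow_le_pow_left card_le_prod_card_orbitRel_quotient_orbit 3).trans
    (Finset.prod_pow_three_le_three_pow_sum _ _)

theorem card_orbit_eq_three_of_card_pow_three_eq [Finite α]
    (h : Nat.card G ^ 3 = 3 ^ Nat.card α) (x : α) : Nat.card (orbit G x) = 3 := by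
  let := Fintype.ofFinite (orbitRel.Quotient G α)
  rw [← sum_card_orbitRel_quotient_orbit (G := G) (α := α)] at h
  have hle := Nat.pow_le_pow_left (card_le_prod_card_orbitRel_quotient_orbit (G := G) (α := α)) 3
  have hprod := le_antisymm (Finset.prod_pow_three_le_three_pow_sum _ _) (h ▸ hle)
  refine Finset.eq_three_of_prod_pow_three_eq_three_pow_sum (fun ω _ => ?_) hprod
    (Quotient.mk'' x) (Finset.mem_univ _)
  have := (orbitRel.Quotient.nonempty_orbit ω).to_subtype
  exact Nat.card_pos

theorem pow_eq_one_of_forall_card_orbit_eq {p : ℕ} (h : ∀ x : α, Nat.card (orbit G x) = p)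
    (g : G) : g ^ p = 1 := by
  refine FaithfulSMul.eq_of_smul_eq_smul (α := α) fun x => ?_
  -- stabilizers are normal since `G` is commutative, so `g ^ index` lies in them
  have : g ^ (stabilizer G x).index ∈ stabilizer G x := Subgroup.pow_index_mem _ g
  rw [one_smul]
  rwa [index_stabilizer, ← Nat.card_coe_set_eq, h, mem_stabilizer_iff] at this

end MulAction

theorem Module.nonempty_linearEquiv_fin_pi_of_card_eq {K V : Type*} [Field K] [Finite K]
    [AddCommGroup V] [Module K V] [Finite V] {k : ℕ} (h : Nat.card V = Nat.card K ^ k) :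
    Nonempty (V ≃ₗ[K] (Fin k → K)) := by
  have : Module.Finite K V := .of_finite
  let := Fintype.ofFinite K
  let := Fintype.ofFinite V
  have hrank : finrank K V = k := by
    refine Nat.pow_right_injective (Finite.one_lt_card (α := K)) (?_ : _ ^ _ = _ ^ k)
    rw [← h, Nat.card_eq_fintype_card, Nat.card_eq_fintype_card,
      card_eq_pow_finrank (K := K) (V := V)]
  exact ⟨(finBasisOfFinrankEq K V hrank).equivFun⟩

theorem CommGroup.nonempty_mulEquiv_pi_zmod_of_pow_eq_one {G : Type*} [CommGroup G] [Finite G]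
    {p k : ℕ} [Fact p.Prime] (hG : ∀ g : G, g ^ p = 1) (hcard : Nat.card G = p ^ k) :
    Nonempty (G ≃* (Fin k → Multiplicative (ZMod p))) := by
  let : Module (ZMod p) (Additive G) :=
    AddCommMonoid.zmodModule fun x => congrArg Additive.ofMul (hG x.toMul)
  obtain ⟨e⟩ := Module.nonempty_linearEquiv_fin_pi_of_card_eq (K := ZMod p) (V := Additive G)
    (by rwa [Nat.card_zmod])
  exact ⟨(MulEquiv.multiplicativeAdditive G).symm.trans
    ((AddEquiv.toMultiplicative e.toAddEquiv).trans (MulEquiv.funMultiplicative _ _))⟩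

theorem Equiv.Perm.exists_subgroup_mulEquiv_pi {ι G α : Type*} [Group G]
    (e : α ≃ Σ _ : ι, G) :
    ∃ M : Subgroup (Perm α), Nonempty (M ≃* (ι → G)) := by
  let φ : (ι → G) →* Perm α := (permCongrHom e.symm).toMonoidHom.comp
    ((sigmaCongrRightHom fun _ => G).comp ((MulAction.toPermHom G G).compLeft ι))
  have hφ : Function.Injective φ := (permCongrHom e.symm).injective.comp <|
    sigmaCongrRightHom_injective.comp fun f g h =>
      funext fun i => MulAction.toPerm_injective (congrFun h i)
  exact ⟨φ.range, ⟨(MonoidHom.ofInjective hφ).symm⟩⟩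

/-- For `n = 3k`, the maximal order of an abelian subgroup of `S_n` is `3^k`,
and any abelian subgroup attaining this order is isomorphic to `(ℤ/3)^k`. -/
theorem maximal_abelian_symmetric_three_k (k n : ℕ) (hn : n = 3 * k) :
    IsGreatest {m : ℕ | ∃ M : Subgroup (Equiv.Perm (Fin n)),
        (∀ a b : M, a * b = b * a) ∧ Nat.card M = m} (3 ^ k) ∧
    ∀ M : Subgroup (Equiv.Perm (Fin n)), (∀ a b : M, a * b = b * a) →
      Nat.card M = 3 ^ k →
      Nonempty (M ≃* (Fin k → Multiplicative (ZMod 3))) := by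
  have hcube : 3 ^ Nat.card (Fin n) = (3 ^ k) ^ 3 := by rw [Nat.card_fin, hn, ← pow_mul, mul_comm]
  refine ⟨⟨?_, ?_⟩, fun M hM hcard => ?_⟩
  · obtain ⟨M, ⟨e⟩⟩ := Equiv.Perm.exists_subgroup_mulEquiv_pi
      (Fintype.equivOfCardEq (α := Fin n) (β := Σ _ : Fin k, Multiplicative (ZMod 3))
        (by simp [hn, mul_comm]))
    refine ⟨M, fun a b => e.injective (by simp only [map_mul, mul_comm]), ?_⟩
    simp [Nat.card_congr e.toEquiv]
  · rintro m ⟨M, hM, rfl⟩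
    let : CommGroup M := { mul_comm := hM }
    exact (Nat.pow_le_pow_iff_left three_ne_zero).mp
      (hcube ▸ MulAction.card_pow_three_le_three_pow_card)
  · let : CommGroup M := { mul_comm := hM }
    have horbit := MulAction.card_orbit_eq_three_of_card_pow_three_eq (G := M) (α := Fin n)
      (by rw [hcard, hcube])
    exact CommGroup.nonempty_mulEquiv_pi_zmod_of_pow_eq_one
      (MulAction.pow_eq_one_of_forall_card_orbit_eq horbit) hcard
end

section
/- For n = 3k+2, the maximal order of an abelian subgroup of the symmetric group S_n is 2·3^k, and any abelian subgroup attaining this order is isomorphic to (Z/3)^k × (Z/2). -/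
/-!
An abelian group acting faithfully and transitively acts regularly, so an abelian subgroup `M`
of `Perm β` induces a group of order `|O|` on an orbit `O`, and `M` embeds into the product of
that group with its image in `Perm Oᶜ`. Peeling off one orbit at a time gives
`|M| ≤ maxPartProd |β|`, the largest product of a partition of `|β|`. In the equality case `M`
is that product, and the equality case of `maxPartProd` forces `|O| = 3`, or `|O| = 2` with
`3 ∣ |Oᶜ|`; groups of prime order are cyclic, and induction gives `(ℤ/3)^k × ℤ/2`.
-/

open Equiv MulAction

/-- The largest product of the parts of a partition of `n`: all parts `3`, except for one part
`2` or `4` (or a single part `1`). -/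
def maxPartProd : ℕ → ℕ
  | 0 => 1
  | 1 => 1
  | 2 => 2
  | 3 => 3
  | 4 => 4
  | n + 5 => 3 * maxPartProd (n + 2)

theorem maxPartProd_add_three {n : ℕ} (hn : 2 ≤ n) :
    maxPartProd (n + 3) = 3 * maxPartProd n := by
  obtain ⟨n, rfl⟩ := Nat.exists_eq_add_of_le' hn
  rfl

theorem three_mul_maxPartProd_le (n : ℕ) : 3 * maxPartProd n ≤ maxPartProd (n + 3) := by
  rcases lt_or_ge n 2 with hn | hn
  · interval_cases n <;> decide
  · exact (maxPartProd_add_three hn).ge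

theorem le_maxPartProd (n : ℕ) : n ≤ maxPartProd n := by
  induction n using maxPartProd.induct with
  | case6 n ih => rw [maxPartProd]; omega
  | _ => decide

theorem lt_maxPartProd {n : ℕ} (hn : 5 ≤ n) : n < maxPartProd n := by
  obtain ⟨n, rfl⟩ := Nat.exists_eq_add_of_le' hn
  have := le_maxPartProd (n + 2)
  rw [maxPartProd]
  omega

theorem maxPartProd_pos (n : ℕ) : 0 < maxPartProd n := by
  rcases n with _ | n
  · decide
  · exact lt_of_lt_of_le n.succ_pos (le_maxPartProd _)

theorem maxPartProd_mul_le (a b : ℕ) : maxPartProd a * maxPartProd b ≤ maxPartProd (a + b) := by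
  induction hn : a + b using Nat.strong_induction_on generalizing a b with
  | _ n ih =>
  wlog hba : b ≤ a generalizing a b
  · rw [mul_comm]
    exact this b a (by omega) (by omega)
  subst hn
  rcases lt_or_ge a 5 with ha | ha
  · interval_cases a <;> interval_cases b <;> decide
  obtain ⟨a, rfl⟩ := Nat.exists_eq_add_of_le' ha
  calc maxPartProd (a + 5) * maxPartProd b = 3 * (maxPartProd (a + 2) * maxPartProd b) := by
        rw [maxPartProd, mul_assoc]
    _ ≤ 3 * maxPartProd (a + 2 + b) := by gcongr; exact ih _ (by omega) _ _ rfl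
    _ ≤ maxPartProd (a + 2 + b + 3) := three_mul_maxPartProd_le _
    _ = maxPartProd (a + 5 + b) := by ring_nf

theorem maxPartProd_three_mul (k : ℕ) : maxPartProd (3 * k) = 3 ^ k := by
  induction k with
  | zero => rfl
  | succ k ih =>
    rcases k with _ | k
    · rfl
    · rw [show 3 * (k + 2) = 3 * (k + 1) + 3 by ring, maxPartProd_add_three (by omega), ih,
        pow_succ _ (k + 1), mul_comm]

theorem maxPartProd_three_mul_add_two (k : ℕ) : maxPartProd (3 * k + 2) = 2 * 3 ^ k := by
  induction k with
  | zero => rfl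
  | succ k ih =>
    rw [show 3 * (k + 1) + 2 = 3 * k + 2 + 3 by ring, maxPartProd_add_three (by omega), ih,
      pow_succ]
    ring

theorem eq_maxPartProd_of_mul_maxPartProd_eq {m c : ℕ}
    (h : m * maxPartProd c = maxPartProd (m + c)) :
    m = maxPartProd m := by
  refine le_antisymm (le_maxPartProd m) (Nat.le_of_mul_le_mul_right ?_ (maxPartProd_pos c))
  exact h ▸ maxPartProd_mul_le m c

theorem eq_three_or_of_mul_maxPartProd_eq {m c : ℕ} (h : m * maxPartProd c = maxPartProd (m + c))
    (hmod : (m + c) % 3 ≠ 1) : m = 3 ∨ m = 2 ∧ c % 3 = 0 := by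
  have hm : m ≤ 4 := by
    by_contra! hm
    exact (lt_maxPartProd hm).ne (eq_maxPartProd_of_mul_maxPartProd_eq h)
  induction c using Nat.strong_induction_on with
  | _ c ih =>
  rcases lt_or_ge c 5 with hc | hc
  · interval_cases m <;> interval_cases c <;> simp_all [maxPartProd]
  -- for `c ≥ 2` both sides of `h` are multiplied by `3` when `c` grows by `3`
  obtain ⟨c, rfl⟩ := Nat.exists_eq_add_of_le' hc
  rw [maxPartProd, show m + (c + 5) = m + (c + 2) + 3 by ring,
    maxPartProd_add_three (by omega)] at h
  have := ih (c + 2) (by omega) (by rw [mul_left_comm] at h; omega) (by omega)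
  omega

def Fin.consMulEquiv (M : Type*) [Mul M] (n : ℕ) : M × (Fin n → M) ≃* (Fin (n + 1) → M) :=
  { Fin.consEquiv fun _ => M with
    map_mul' x y := by
      ext i
      refine Fin.cases ?_ (fun i => ?_) i <;> simp [Fin.consEquiv] }

theorem SubMulAction.card_add_card_compl {G β : Type*} [Group G] [MulAction G β] [Finite β]
    (p : SubMulAction G β) : Nat.card p + Nat.card ↥pᶜ = Nat.card β := by
  classical
  rw [← Nat.card_sum]
  exact Nat.card_congr (Equiv.sumCompl (· ∈ p))

namespace MulAction

variable {G β : Type*} [Group G] [MulAction G β]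

variable (G) in
def orbitSubMulAction (a : β) : SubMulAction G β where
  carrier := orbit G a
  smul_mem' g _ := mem_orbit_of_mem_orbit g

instance (a : β) : Nonempty (orbitSubMulAction G a) := ⟨⟨a, mem_orbit_self a⟩⟩

instance (a : β) : IsPretransitive G (orbitSubMulAction G a) := by
  refine ⟨?_⟩
  rintro ⟨-, g, rfl⟩ ⟨-, h, rfl⟩
  exact ⟨h * g⁻¹, Subtype.ext (by simp [mul_smul])⟩

theorem bijective_smul_of_isMulCommutative [IsMulCommutative G] [FaithfulSMul G β]
    [IsPretransitive G β] (a : β) : Function.Bijective (fun g : G => g • a) := by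
  refine ⟨fun g h hgh => eq_of_smul_eq_smul (α := β) fun x => ?_, exists_smul_eq G a⟩
  obtain ⟨k, rfl⟩ := exists_smul_eq G a x
  simp only at hgh
  rw [smul_smul, mul_comm', mul_smul, hgh, ← mul_smul, mul_comm', mul_smul]

theorem card_range_toPermHom [IsMulCommutative G] [IsPretransitive G β] [Nonempty β] :
    Nat.card (toPermHom G β).range = Nat.card β := by
  have : IsPretransitive (toPermHom G β).range β :=
    ⟨fun x y => by
      obtain ⟨g, rfl⟩ := exists_smul_eq G x y
      exact ⟨⟨toPermHom G β g, g, rfl⟩, rfl⟩⟩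
  exact Nat.card_eq_of_bijective _ (bijective_smul_of_isMulCommutative (Classical.arbitrary β))

theorem injective_toPermHom_prod_compl [FaithfulSMul G β] (p : SubMulAction G β) :
    Function.Injective
      ((toPermHom G p).rangeRestrict.prod (toPermHom G ↥pᶜ).rangeRestrict) := by
  intro g h hgh
  simp only [MonoidHom.prod_apply, Prod.mk.injEq, Subtype.ext_iff] at hgh
  refine eq_of_smul_eq_smul (α := β) fun x => ?_
  by_cases hx : x ∈ p
  · exact congrArg Subtype.val (Equiv.ext_iff.1 hgh.1 ⟨x, hx⟩)
  · exact congrArg Subtype.val (Equiv.ext_iff.1 hgh.2 ⟨x, hx⟩)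

theorem nonempty_mulEquiv_prod_range_compl [Finite β] [FaithfulSMul G β] [IsMulCommutative G]
    (p : SubMulAction G β) [IsPretransitive G p] [Nonempty p] {q : ℕ} [Fact q.Prime]
    (hp : Nat.card p = q) (hG : Nat.card G = q * Nat.card (toPermHom G ↥pᶜ).range) :
    Nonempty (G ≃* Multiplicative (ZMod q) × (toPermHom G ↥pᶜ).range) := by
  have hbij : Function.Bijective
      ((toPermHom G p).rangeRestrict.prod (toPermHom G ↥pᶜ).rangeRestrict) := by
    rw [Nat.bijective_iff_injective_and_card, Nat.card_prod, card_range_toPermHom, hp, hG]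
    exact ⟨injective_toPermHom_prod_compl p, rfl⟩
  have e : (toPermHom G p).range ≃* Multiplicative (ZMod q) :=
    mulEquivOfPrimeCardEq (by rw [card_range_toPermHom, hp]) (by simp)
  exact ⟨(MulEquiv.ofBijective _ hbij).trans (e.prodCongr (MulEquiv.refl _))⟩

theorem card_le_card_mul_card_range_compl [Finite β] [FaithfulSMul G β] [IsMulCommutative G]
    (p : SubMulAction G β) [IsPretransitive G p] [Nonempty p] :
    Nat.card G ≤ Nat.card p * Nat.card (toPermHom G ↥pᶜ).range := by
  rw [← card_range_toPermHom (G := G) (β := p), ← Nat.card_prod]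
  exact Nat.card_le_card_of_injective _ (injective_toPermHom_prod_compl p)

end MulAction

namespace Equiv.Perm

variable {β : Type*} [Finite β]

theorem card_subgroup_le_maxPartProd (M : Subgroup (Perm β)) [IsMulCommutative M] :
    Nat.card M ≤ maxPartProd (Nat.card β) := by
  induction hn : Nat.card β using Nat.strong_induction_on generalizing β with
  | _ n ih =>
  rcases isEmpty_or_nonempty β with hβ | ⟨⟨a⟩⟩
  · calc Nat.card M ≤ Nat.card (Perm β) := M.card_le_card_group
      _ = maxPartProd n := by rw [Nat.card_perm, ← hn, Nat.card_of_isEmpty]; rfl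
  set p := orbitSubMulAction M a
  have hsum := p.card_add_card_compl
  have hp : 0 < Nat.card p := Nat.card_pos
  calc Nat.card M ≤ Nat.card p * Nat.card (toPermHom M ↥pᶜ).range :=
        card_le_card_mul_card_range_compl p
    _ ≤ Nat.card p * maxPartProd (Nat.card ↥pᶜ) := by
        gcongr; exact ih _ (by omega) _ rfl
    _ ≤ maxPartProd (Nat.card p) * maxPartProd (Nat.card ↥pᶜ) := by
        gcongr; exact le_maxPartProd _
    _ ≤ maxPartProd n := by rw [← hn, ← hsum]; exact maxPartProd_mul_le _ _

theorem card_eq_mul_of_card_eq_maxPartProd (M : Subgroup (Perm β)) [IsMulCommutative M]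
    (hM : Nat.card M = maxPartProd (Nat.card β)) (p : SubMulAction M β) [IsPretransitive M p]
    [Nonempty p] :
    Nat.card p * maxPartProd (Nat.card ↥pᶜ) = maxPartProd (Nat.card p + Nat.card ↥pᶜ) ∧
      Nat.card M = Nat.card p * Nat.card (toPermHom M ↥pᶜ).range ∧
      Nat.card (toPermHom M ↥pᶜ).range = maxPartProd (Nat.card ↥pᶜ) := by
  rw [SubMulAction.card_add_card_compl]
  have hp : 0 < Nat.card p := Nat.card_pos
  have h₁ := card_le_card_mul_card_range_compl (G := M) p
  have h₂ := Nat.mul_le_mul_left (Nat.card p)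
    (card_subgroup_le_maxPartProd (toPermHom M ↥pᶜ).range)
  have h₃ := Nat.mul_le_mul_right (maxPartProd (Nat.card ↥pᶜ)) (le_maxPartProd (Nat.card p))
  have h₄ := maxPartProd_mul_le (Nat.card p) (Nat.card ↥pᶜ)
  rw [SubMulAction.card_add_card_compl] at h₄
  -- the chain `h₁`, `h₂`, `h₃`, `h₄` leads from `|M|` back to `maxPartProd |β| = |M|`
  exact ⟨by omega, by omega, Nat.eq_of_mul_eq_mul_left hp (by omega)⟩

theorem nonempty_mulEquiv_pi_of_card_eq_three_pow {k : ℕ} (hβ : Nat.card β = 3 * k)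
    (M : Subgroup (Perm β)) [IsMulCommutative M] (hM : Nat.card M = 3 ^ k) :
    Nonempty (M ≃* (Fin k → Multiplicative (ZMod 3))) := by
  induction k generalizing β with
  | zero =>
    have := (Nat.card_eq_one_iff_unique.1 hM).1
    have := uniqueOfSubsingleton (1 : M)
    exact ⟨MulEquiv.ofUnique⟩
  | succ k ih =>
    have : Nonempty β := (Nat.card_pos_iff.1 (by omega)).1
    let p := orbitSubMulAction M (Classical.arbitrary β)
    obtain ⟨hm, hcard, hH⟩ := card_eq_mul_of_card_eq_maxPartProd M
      (by rw [hM, hβ, maxPartProd_three_mul]) p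
    have hsum := p.card_add_card_compl
    have hp : Nat.card p = 3 := by
      have := eq_three_or_of_mul_maxPartProd_eq hm (by omega)
      omega
    have : Fact (Nat.Prime 3) := ⟨Nat.prime_three⟩
    obtain ⟨e₁⟩ := nonempty_mulEquiv_prod_range_compl p hp (hp ▸ hcard)
    obtain ⟨e₂⟩ := ih (β := ↥pᶜ) (by omega) _
      (by rw [hH, show Nat.card ↥pᶜ = 3 * k by omega, maxPartProd_three_mul])
    exact ⟨e₁.trans ((MulEquiv.refl _).prodCongr e₂ |>.trans (Fin.consMulEquiv _ k))⟩

theorem nonempty_mulEquiv_pi_prod_of_card_eq_two_mul_three_pow {k : ℕ}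
    (hβ : Nat.card β = 3 * k + 2) (M : Subgroup (Perm β)) [IsMulCommutative M] (hM : Nat.card M = 2 * 3 ^ k) :
    Nonempty (M ≃* (Fin k → Multiplicative (ZMod 3)) × Multiplicative (ZMod 2)) := by
  induction k using Nat.strong_induction_on generalizing β with
  | _ k ih =>
  have : Nonempty β := (Nat.card_pos_iff.1 (by omega)).1
  let p := orbitSubMulAction M (Classical.arbitrary β)
  obtain ⟨hm, hcard, hH⟩ := card_eq_mul_of_card_eq_maxPartProd M
    (by rw [hM, hβ, maxPartProd_three_mul_add_two]) p
  have hsum := p.card_add_card_compl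
  rcases eq_three_or_of_mul_maxPartProd_eq hm (by omega) with hp | ⟨hp, -⟩
  · obtain ⟨j, rfl⟩ : ∃ j, k = j + 1 := ⟨k - 1, by omega⟩
    have : Fact (Nat.Prime 3) := ⟨Nat.prime_three⟩
    obtain ⟨e₁⟩ := nonempty_mulEquiv_prod_range_compl p hp (hp ▸ hcard)
    obtain ⟨e₂⟩ := ih j (by omega) (β := ↥pᶜ) (by omega) _
      (by rw [hH, show Nat.card ↥pᶜ = 3 * j + 2 by omega, maxPartProd_three_mul_add_two])
    exact ⟨e₁.trans (((MulEquiv.refl _).prodCongr e₂).trans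
      (MulEquiv.prodAssoc.symm.trans ((Fin.consMulEquiv _ j).prodCongr (MulEquiv.refl _))))⟩
  · have : Fact (Nat.Prime 2) := ⟨Nat.prime_two⟩
    obtain ⟨e₁⟩ := nonempty_mulEquiv_prod_range_compl p hp (hp ▸ hcard)
    obtain ⟨e₂⟩ :=
      nonempty_mulEquiv_pi_of_card_eq_three_pow (β := ↥pᶜ) (k := k) (by omega) _
      (by rw [hH, show Nat.card ↥pᶜ = 3 * k by omega, maxPartProd_three_mul])
    exact ⟨e₁.trans (((MulEquiv.refl _).prodCongr e₂).trans MulEquiv.prodComm)⟩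

theorem exists_isMulCommutative_subgroup_card_eq (k : ℕ) :
    ∃ M : Subgroup (Perm (Fin (3 * k + 2))), IsMulCommutative M ∧ Nat.card M = 2 * 3 ^ k := by
  let X := (Σ _ : Fin k, Multiplicative (ZMod 3)) ⊕ Multiplicative (ZMod 2)
  let e : X ≃ Fin (3 * k + 2) := Finite.equivFinOfCardEq (by simp [X]; ring)
  let f :
      (Fin k → Multiplicative (ZMod 3)) × Multiplicative (ZMod 2) →* Perm (Fin (3 * k + 2)) :=
    e.permCongrHom.toMonoidHom.comp <| (sumCongrHom _ _).comp <|
      ((sigmaCongrRightHom _).comp (MonoidHom.piMap fun _ => toPermHom _ _)).prodMap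
        (toPermHom _ _)
  have hf : Function.Injective f :=
    e.permCongrHom.injective.comp <| sumCongrHom_injective.comp <|
      (sigmaCongrRightHom_injective.comp
        (Function.Injective.piMap fun _ => toPerm_injective)).prodMap toPerm_injective
  refine ⟨f.range, inferInstance, ?_⟩
  rw [← Nat.card_congr (MonoidHom.ofInjective hf).toEquiv]
  simp [mul_comm]

end Equiv.Perm

/-- For `n = 3k+2`, the maximal order of an abelian subgroup of `S_n` is `2·3^k`,
and any abelian subgroup attaining this order is isomorphic to `(ℤ/3)^k × ℤ/2`. -/
theorem maximal_abelian_symmetric_three_k_add_two (k n : ℕ) (hn : n = 3 * k + 2) :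
    IsGreatest {m : ℕ | ∃ M : Subgroup (Equiv.Perm (Fin n)),
        (∀ a b : M, a * b = b * a) ∧ Nat.card M = m} (2 * 3 ^ k) ∧
    ∀ M : Subgroup (Equiv.Perm (Fin n)), (∀ a b : M, a * b = b * a) →
      Nat.card M = 2 * 3 ^ k →
      Nonempty (M ≃* ((Fin k → Multiplicative (ZMod 3)) × Multiplicative (ZMod 2))) := by
  subst hn
  refine ⟨⟨?_, ?_⟩, fun M hM hcard => ?_⟩
  · obtain ⟨M, hM, hcard⟩ := Perm.exists_isMulCommutative_subgroup_card_eq k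
    exact ⟨M, isMulCommutative_iff.1 hM, hcard⟩
  · rintro _ ⟨M, hM, rfl⟩
    have := isMulCommutative_iff.2 hM
    simpa [maxPartProd_three_mul_add_two] using Perm.card_subgroup_le_maxPartProd M
  · have := isMulCommutative_iff.2 hM
    exact Perm.nonempty_mulEquiv_pi_prod_of_card_eq_two_mul_three_pow (by simp) M hcard
end

section
/- If A is a finite abelian group with decomposition A ≅ Z/m_1 × ⋯ × Z/m_k as a direct product of cyclic groups of prime power order, and A embeds into the symmetric group S_n, then the trace Tr(A) = m_1 + ⋯ + m_k satisfies Tr(A) ≤ n. -/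
open Finset


/-- The set of elements killed by `p` that are `c`-th powers. -/
def pSet (p c : ℕ) (G : Type*) [Monoid G] : Set G := {x | x ^ p = 1 ∧ ∃ y : G, y ^ c = x}

lemma one_mem_pSet (p c : ℕ) (G : Type*) [Monoid G] : (1 : G) ∈ pSet p c G :=
  ⟨one_pow p, 1, one_pow c⟩

lemma pSet_card_le_of_injective {G H : Type*} [Monoid G] [Monoid H] [Finite H]
    (φ : G →* H) (hφ : Function.Injective φ) (p c : ℕ) :
    Nat.card (pSet p c G) ≤ Nat.card (pSet p c H) := by
  refine Nat.card_le_card_of_injective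
    (fun x => (⟨φ x.1, ?_, ?_⟩ : pSet p c H)) ?_
  · rw [← map_pow, x.2.1, map_one]
  · exact ⟨φ x.2.2.choose, by rw [← map_pow, x.2.2.choose_spec]⟩
  · intro a b hab
    exact Subtype.ext (hφ (congrArg Subtype.val hab))

lemma pSet_card_le_pi {ι : Type*} [Fintype ι] (G : ι → Type*) [∀ i, Monoid (G i)]
    [∀ i, Finite (G i)] (p c : ℕ) :
    Nat.card (pSet p c (∀ i, G i)) ≤ ∏ i, Nat.card (pSet p c (G i)) := by
  rw [← Nat.card_pi]
  refine Nat.card_le_card_of_injective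
    (fun x i => (⟨x.1 i, ?_, ?_⟩ : pSet p c (G i))) ?_
  · exact congrFun x.2.1 i
  · exact ⟨x.2.2.choose i, congrFun x.2.2.choose_spec i⟩
  · intro a b hab
    exact Subtype.ext (funext fun i => congrArg Subtype.val (congrFun hab i))

lemma pi_card_le_pSet {ι : Type*} [Fintype ι] (G : ι → Type*) [∀ i, Monoid (G i)]
    [∀ i, Finite (G i)] (p c : ℕ) :
    ∏ i, Nat.card (pSet p c (G i)) ≤ Nat.card (pSet p c (∀ i, G i)) := by
  rw [← Nat.card_pi]
  refine Nat.card_le_card_of_injective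
    (fun v => (⟨fun i => (v i).1, ?_, ?_⟩ : pSet p c (∀ i, G i))) ?_
  · exact funext fun i => (v i).2.1
  · exact ⟨fun i => (v i).2.2.choose, funext fun i => (v i).2.2.choose_spec⟩
  · intro a b hab
    have : ∀ i, (a i).1 = (b i).1 := fun i => congrFun (congrArg Subtype.val hab) i
    exact funext fun i => Subtype.ext (this i)

-- lower bound: if p^t ∣ q then the cyclic group of order q has ≥ p elements in pSet p (p^(t-1))
lemma le_card_pSet_zmod {q p t : ℕ} (hp : p.Prime) (ht : 0 < t) (hdvd : p ^ t ∣ q) (hq : q ≠ 0) :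
    p ≤ Nat.card (pSet p (p ^ (t - 1)) (Multiplicative (ZMod q))) := by
  haveI : NeZero q := ⟨hq⟩
  have hpq : p ∣ q := (dvd_pow_self p ht.ne').trans hdvd
  have hqp_pos : 0 < q / p := Nat.div_pos (Nat.le_of_dvd (Nat.pos_of_ne_zero hq) hpq) hp.pos
  have key : p ^ (t - 1) * (q / p ^ t) = q / p := by
    obtain ⟨d, rfl⟩ := hdvd
    rw [Nat.mul_div_cancel_left d (Nat.pos_of_ne_zero (pow_ne_zero t hp.ne_zero))]
    rw [show p ^ t = p * p ^ (t-1) by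
      rw [← pow_succ']
      congr 1
      omega]
    rw [mul_assoc, Nat.mul_div_cancel_left _ hp.pos]
  have hlt : ∀ v : Fin p, q / p * v.val < q := by
    intro v
    calc q / p * v.val < q / p * p := by
          exact mul_lt_mul_of_pos_left v.2 hqp_pos
      _ = q := Nat.div_mul_cancel hpq
  have main : Nat.card (Fin p) ≤ Nat.card (pSet p (p ^ (t - 1)) (Multiplicative (ZMod q))) := by
    refine Nat.card_le_card_of_injective
      (fun v => (⟨Multiplicative.ofAdd ((q / p * v.val : ℕ) : ZMod q), ?_, ?_⟩ :
        pSet p (p ^ (t - 1)) (Multiplicative (ZMod q)))) ?_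
    · show Multiplicative.ofAdd _ ^ p = 1
      rw [← ofAdd_nsmul, nsmul_eq_mul]
      push_cast
      rw [← mul_assoc, ← Nat.cast_mul, Nat.mul_div_cancel' hpq, ZMod.natCast_self, zero_mul]
      rfl
    · refine ⟨Multiplicative.ofAdd ((q / p ^ t * v.val : ℕ) : ZMod q), ?_⟩
      rw [← ofAdd_nsmul, nsmul_eq_mul]
      congr 1
      push_cast
      rw [← mul_assoc, ← Nat.cast_mul, ← Nat.cast_pow, ← Nat.cast_mul, key]
      push_cast
      ring
    · intro a b hab
      have h1 : ((q / p * a.val : ℕ) : ZMod q) = ((q / p * b.val : ℕ) : ZMod q) := by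
        have := congrArg Subtype.val hab
        exact Multiplicative.ofAdd.injective this
      have h2 : q / p * a.val = q / p * b.val := by
        have := congrArg ZMod.val h1
        rwa [ZMod.val_natCast_of_lt (hlt a), ZMod.val_natCast_of_lt (hlt b)] at this
      exact Fin.ext (Nat.eq_of_mul_eq_mul_left hqp_pos h2)
  simpa using main


-- upper bound 1: not divisible case
lemma card_pSet_zmod_le_one {q p t f p' : ℕ} (hp : p.Prime) (hp' : p'.Prime) (ht : 0 < t) (hq : q = p' ^ f)
    (hndvd : ¬ p ^ t ∣ q) :
    Nat.card (pSet p (p ^ (t - 1)) (Multiplicative (ZMod q))) ≤ 1 := by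
  have hq0 : q ≠ 0 := hq ▸ pow_ne_zero f hp'.ne_zero
  haveI : NeZero q := ⟨hq0⟩
  rw [Finite.card_le_one_iff_subsingleton]
  by_cases hpq : p ∣ q
  · -- then p = p', and f < t, so q ∣ p^(t-1), so all c-th powers are 1
    have hpp' : p = p' := by
      rw [hq] at hpq
      exact (Nat.prime_dvd_prime_iff_eq hp hp').mp (hp.dvd_of_dvd_pow hpq)
    subst hpp' hq
    have hft : f < t := by
      by_contra h
      exact hndvd (pow_dvd_pow p (le_of_not_gt h))
    have hdvd : (p ^ f : ℕ) ∣ p ^ (t - 1) := pow_dvd_pow p (by omega)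
    refine ⟨fun a b => Subtype.ext ?_⟩
    have key : ∀ x : Multiplicative (ZMod (p ^ f)), x ∈ pSet p (p ^ (t-1)) _ → x = 1 := by
      rintro x ⟨-, y, rfl⟩
      obtain ⟨r, hr⟩ := hdvd
      rw [hr, pow_mul]
      have : y ^ (p ^ f) = 1 := by
        have := pow_card_eq_one' (G := Multiplicative (ZMod (p ^ f))) (x := y)
        rwa [Nat.card_eq_fintype_card, Fintype.card_multiplicative, ZMod.card] at this
      rw [this, one_pow]
    rw [key a.1 a.2, key b.1 b.2]
  · -- p coprime to q : x^p = 1 forces x = 1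
    refine ⟨fun a b => Subtype.ext ?_⟩
    have key : ∀ x : Multiplicative (ZMod q), x ∈ pSet p (p ^ (t-1)) _ → x = 1 := by
      rintro x ⟨h1, -⟩
      have hcop : Nat.Coprime p q := (Nat.Prime.coprime_iff_not_dvd hp).mpr hpq
      have hunit : IsUnit (p : ZMod q) := (ZMod.isUnit_iff_coprime p q).mpr hcop
      have h2 : (p : ZMod q) * x.toAdd = 0 := by
        have := congrArg Multiplicative.toAdd h1
        rwa [toAdd_pow, nsmul_eq_mul, toAdd_one] at this
      have : x.toAdd = 0 := by
        obtain ⟨u, hu⟩ := hunit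
        calc x.toAdd = (↑u⁻¹ * u) * x.toAdd := by rw [Units.inv_mul, one_mul]
          _ = ↑u⁻¹ * ((p : ZMod q) * x.toAdd) := by rw [mul_assoc, hu]
          _ = 0 := by rw [h2, mul_zero]
      have := congrArg Multiplicative.ofAdd this
      simpa using this
    rw [key a.1 a.2, key b.1 b.2]

-- upper bound 2: ≤ p always (when p ∣ q)
lemma card_pSet_zmod_le_p {q p : ℕ} (hp : p.Prime) (hpq : p ∣ q) (hq : q ≠ 0) (c : ℕ) :
    Nat.card (pSet p c (Multiplicative (ZMod q))) ≤ p := by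
  haveI : NeZero q := ⟨hq⟩
  have hqp_pos : 0 < q / p := Nat.div_pos (Nat.le_of_dvd (Nat.pos_of_ne_zero hq) hpq) hp.pos
  have main : Nat.card (pSet p c (Multiplicative (ZMod q))) ≤ Nat.card (Fin p) := by
    refine Nat.card_le_card_of_injective (fun x => (⟨(Multiplicative.toAdd x.1).val / (q / p), ?_⟩ : Fin p)) ?_
    · -- value < p
      have hv : (Multiplicative.toAdd x.1).val < q := ZMod.val_lt _
      have : (Multiplicative.toAdd x.1).val < (q / p) * p := by
        rwa [Nat.div_mul_cancel hpq]
      exact Nat.div_lt_of_lt_mul this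
    · intro a b hab
      -- divisibility: (q/p) ∣ val
      have hdvd : ∀ x : pSet p c (Multiplicative (ZMod q)), (q / p) ∣ (Multiplicative.toAdd x.1).val := by
        rintro ⟨x, h1, -⟩
        have h2 : ((p * (Multiplicative.toAdd x).val : ℕ) : ZMod q) = 0 := by
          have := congrArg Multiplicative.toAdd h1
          rw [toAdd_pow, nsmul_eq_mul, toAdd_one] at this
          push_cast
          rw [ZMod.natCast_val, ZMod.cast_id]
          exact this
        have h3 : q ∣ p * (Multiplicative.toAdd x).val := (ZMod.natCast_eq_zero_iff _ _).mp h2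
        obtain ⟨d, hd⟩ := h3
        refine ⟨d, ?_⟩
        have h5 : p * (Multiplicative.toAdd x).val = p * (q / p * d) := by
          rw [hd, ← mul_assoc, Nat.mul_div_cancel' hpq]
        exact Nat.eq_of_mul_eq_mul_left hp.pos h5
      have hval : (Multiplicative.toAdd a.1).val = (Multiplicative.toAdd b.1).val := by
        obtain ⟨da, hda⟩ := hdvd a
        obtain ⟨db, hdb⟩ := hdvd b
        have h1 : (Multiplicative.toAdd a.1).val / (q / p) = (Multiplicative.toAdd b.1).val / (q / p) :=
          congrArg Fin.val hab
        rw [hda, hdb, Nat.mul_div_cancel_left _ hqp_pos, Nat.mul_div_cancel_left _ hqp_pos] at h1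
        rw [hda, hdb, h1]
      exact Subtype.ext (by
        have := congrArg (fun v : ℕ => (Multiplicative.ofAdd ((v : ZMod q)))) hval
        simpa [ZMod.natCast_val, ZMod.cast_id] using this)
  simpa using main

lemma card_pSet_pi_le {ι : Type*} [Fintype ι] (q : ι → ℕ)
    (hq : ∀ i, ∃ p' f : ℕ, p'.Prime ∧ q i = p' ^ f) (p t : ℕ) (hp : p.Prime) (ht : 0 < t) :
    Nat.card (pSet p (p ^ (t - 1)) (∀ i, Multiplicative (ZMod (q i)))) ≤
      p ^ (univ.filter (fun i => p ^ t ∣ q i)).card := by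
  classical
  haveI : ∀ i, NeZero (q i) := fun i => by
    obtain ⟨p', f, hp', hqi⟩ := hq i
    exact ⟨hqi ▸ pow_ne_zero f hp'.ne_zero⟩
  calc Nat.card (pSet p (p ^ (t - 1)) (∀ i, Multiplicative (ZMod (q i))))
      ≤ ∏ i, Nat.card (pSet p (p ^ (t - 1)) (Multiplicative (ZMod (q i)))) :=
        pSet_card_le_pi _ p _
    _ ≤ ∏ i, (if p ^ t ∣ q i then p else 1) := by
        refine Finset.prod_le_prod (fun i _ => Nat.zero_le _) (fun i _ => ?_)
        obtain ⟨p', f, hp', hqi⟩ := hq i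
        by_cases h : p ^ t ∣ q i
        · rw [if_pos h]
          exact card_pSet_zmod_le_p hp ((dvd_pow_self p ht.ne').trans h) (NeZero.ne (q i)) _
        · rw [if_neg h]
          exact card_pSet_zmod_le_one hp hp' ht hqi h
    _ = p ^ (univ.filter (fun i => p ^ t ∣ q i)).card := by
        rw [Finset.prod_ite, Finset.prod_const, Finset.prod_const_one, mul_one]

lemma pow_card_le_pSet {ι : Type*} [Fintype ι] (m : ι → ℕ) (hm : ∀ i, m i ≠ 0)
    (p t : ℕ) (hp : p.Prime) (ht : 0 < t) :
    p ^ (univ.filter (fun i => p ^ t ∣ m i)).card ≤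
      Nat.card (pSet p (p ^ (t - 1)) (∀ i, Multiplicative (ZMod (m i)))) := by
  classical
  haveI : ∀ i, NeZero (m i) := fun i => ⟨hm i⟩
  calc p ^ (univ.filter (fun i => p ^ t ∣ m i)).card
      = ∏ i, (if p ^ t ∣ m i then p else 1) := by
        rw [Finset.prod_ite, Finset.prod_const, Finset.prod_const_one, mul_one]
    _ ≤ ∏ i, Nat.card (pSet p (p ^ (t - 1)) (Multiplicative (ZMod (m i)))) := by
        refine Finset.prod_le_prod (fun i _ => Nat.zero_le _) (fun i _ => ?_)
        by_cases h : p ^ t ∣ m i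
        · rw [if_pos h]
          exact le_card_pSet_zmod hp ht h (hm i)
        · rw [if_neg h]
          have : Nonempty (pSet p (p ^ (t - 1)) (Multiplicative (ZMod (m i)))) :=
            ⟨⟨1, one_mem_pSet _ _ _⟩⟩
          exact Nat.card_pos
    _ ≤ Nat.card (pSet p (p ^ (t - 1)) (∀ i, Multiplicative (ZMod (m i)))) :=
        pi_card_le_pSet _ p _

lemma sum_le_prod_of_two_le {ι : Type*} (s : Finset ι) (f : ι → ℕ) (hf : ∀ i ∈ s, 2 ≤ f i) :
    ∑ i ∈ s, f i ≤ ∏ i ∈ s, f i := by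
  classical
  induction s using Finset.cons_induction with
  | empty => simp
  | cons a s ha ih =>
    rw [Finset.sum_cons, Finset.prod_cons]
    have hfa := hf a (Finset.mem_cons_self a s)
    have hs : ∀ i ∈ s, 2 ≤ f i := fun i hi => hf i (Finset.mem_cons_of_mem hi)
    rcases s.eq_empty_or_nonempty with rfl | ⟨j, hj⟩
    · simp
    · have hP : 2 ≤ ∏ i ∈ s, f i :=
        le_trans (hs j hj) (Finset.single_le_prod' (fun i hi => by linarith [hs i hi]) hj)
      have hS := ih hs
      have : f a + ∏ i ∈ s, f i ≤ f a * ∏ i ∈ s, f i := by nlinarith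
      omega

lemma multiset_trace_le (N : ℕ) : ∀ M Q : Multiset ℕ, Multiset.card M ≤ N →
    (∀ a ∈ M, ∃ p e : ℕ, p.Prime ∧ 0 < e ∧ a = p ^ e) →
    (∀ a ∈ Q, ∃ p e : ℕ, p.Prime ∧ a = p ^ e) →
    (∀ p t : ℕ, p.Prime → 0 < t →
      Multiset.countP (p ^ t ∣ ·) M ≤ Multiset.countP (p ^ t ∣ ·) Q) →
    M.sum ≤ Q.sum := by
  induction N with
  | zero =>
    intro M Q hcard _ _ _
    rw [Multiset.card_eq_zero.mp (Nat.le_zero.mp hcard)]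
    exact Nat.zero_le _
  | succ n ih =>
    intro M Q hcard hM hQ h
    rcases eq_or_ne M 0 with rfl | hM0
    · exact Nat.zero_le _
    -- pick the maximal element a of M
    have hMne : M.toFinset.Nonempty := Multiset.toFinset_nonempty.mpr hM0
    set a := M.toFinset.max' hMne with hadef
    have hamem : a ∈ M := Multiset.mem_toFinset.mp (M.toFinset.max'_mem hMne)
    have hmax : ∀ x ∈ M, x ≤ a := fun x hx =>
      M.toFinset.le_max' x (Multiset.mem_toFinset.mpr hx)
    obtain ⟨p₀, e₀, hp₀, he₀, ha⟩ := hM a hamem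
    -- find a matching element b in Q
    have hcnt : 0 < Multiset.countP (p₀ ^ e₀ ∣ ·) Q := by
      refine lt_of_lt_of_le ?_ (h p₀ e₀ hp₀ he₀)
      rw [Multiset.countP_pos]
      exact ⟨a, hamem, ha ▸ dvd_refl _⟩
    obtain ⟨b, hbmem, hbdvd⟩ := Multiset.countP_pos.mp hcnt
    obtain ⟨p₁, f, hp₁, hb⟩ := hQ b hbmem
    have hpp : p₀ = p₁ := by
      have h1 : p₀ ∣ p₁ ^ f := dvd_trans (dvd_pow_self p₀ he₀.ne') (hb ▸ hbdvd)
      exact (Nat.prime_dvd_prime_iff_eq hp₀ hp₁).mp (hp₀.dvd_of_dvd_pow h1)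
    subst hpp
    have hef : e₀ ≤ f := (Nat.pow_dvd_pow_iff_le_right hp₀.one_lt).mp (hb ▸ hbdvd)
    have hab : a ≤ b := by
      rw [ha, hb]
      exact Nat.pow_le_pow_right hp₀.pos hef
    -- erase and recurse
    have hcons : a ::ₘ M.erase a = M := Multiset.cons_erase hamem
    have hconsQ : b ::ₘ Q.erase b = Q := Multiset.cons_erase hbmem
    have hcard' : Multiset.card (M.erase a) ≤ n := by
      rw [Multiset.card_erase_of_mem hamem]
      exact Nat.pred_le_pred hcard
    have hM' : ∀ x ∈ M.erase a, ∃ p e : ℕ, p.Prime ∧ 0 < e ∧ x = p ^ e :=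
      fun x hx => hM x (Multiset.mem_of_mem_erase hx)
    have hQ' : ∀ x ∈ Q.erase b, ∃ p e : ℕ, p.Prime ∧ x = p ^ e :=
      fun x hx => hQ x (Multiset.mem_of_mem_erase hx)
    have h' : ∀ p t : ℕ, p.Prime → 0 < t →
        Multiset.countP (p ^ t ∣ ·) (M.erase a) ≤ Multiset.countP (p ^ t ∣ ·) (Q.erase b) := by
      intro p t hp ht
      have hMid : Multiset.countP (p ^ t ∣ ·) M =
          Multiset.countP (p ^ t ∣ ·) (M.erase a) + (if p ^ t ∣ a then 1 else 0) := by
        conv_lhs => rw [← hcons]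
        rw [Multiset.countP_cons]
      have hQid : Multiset.countP (p ^ t ∣ ·) Q =
          Multiset.countP (p ^ t ∣ ·) (Q.erase b) + (if p ^ t ∣ b then 1 else 0) := by
        conv_lhs => rw [← hconsQ]
        rw [Multiset.countP_cons]
      have hle := h p t hp ht
      by_cases hpa : p ^ t ∣ a
      · -- then p = p₀ and t ≤ e₀ ≤ f, so p ^ t ∣ b
        have hp0 : p = p₀ := by
          have h1 : p ∣ p₀ ^ e₀ := dvd_trans (dvd_pow_self p ht.ne') (ha ▸ hpa)
          exact (Nat.prime_dvd_prime_iff_eq hp hp₀).mp (hp.dvd_of_dvd_pow h1)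
        subst hp0
        have hte : t ≤ e₀ := (Nat.pow_dvd_pow_iff_le_right hp.one_lt).mp (ha ▸ hpa)
        have hpb : p ^ t ∣ b := hb ▸ pow_dvd_pow p (hte.trans hef)
        rw [hMid, if_pos hpa] at hle
        rw [hQid, if_pos hpb] at hle
        omega
      · by_cases hpb : p ^ t ∣ b
        · -- impossible for M to have anything divisible by p ^ t
          have hp0 : p = p₀ := by
            have h1 : p ∣ p₀ ^ f := dvd_trans (dvd_pow_self p ht.ne') (hb ▸ hpb)
            exact (Nat.prime_dvd_prime_iff_eq hp hp₀).mp (hp.dvd_of_dvd_pow h1)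
          subst hp0
          have hte : e₀ < t := by
            by_contra hc
            exact hpa (ha ▸ pow_dvd_pow p (le_of_not_gt hc))
          have hzero : Multiset.countP (p ^ t ∣ ·) M = 0 := by
            rw [Multiset.countP_eq_zero]
            rintro x hx hdx
            obtain ⟨p', e', hp', he', hx'⟩ := hM x hx
            have hpp' : p = p' := by
              have h1 : p ∣ p' ^ e' := dvd_trans (dvd_pow_self p ht.ne') (hx' ▸ hdx)
              exact (Nat.prime_dvd_prime_iff_eq hp hp').mp (hp.dvd_of_dvd_pow h1)
            subst hpp'
            have hte' : t ≤ e' := (Nat.pow_dvd_pow_iff_le_right hp.one_lt).mp (hx' ▸ hdx)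
            have : a < x := by
              rw [ha, hx']
              exact Nat.pow_lt_pow_right hp.one_lt (by omega)
            exact absurd (hmax x hx) (not_le.mpr this)
          have : Multiset.countP (p ^ t ∣ ·) (M.erase a) = 0 := by omega
          omega
        · rw [hMid, if_neg hpa] at hle
          rw [hQid, if_neg hpb] at hle
          omega
    have hsum := ih (M.erase a) (Q.erase b) hcard' hM' hQ' h'
    have hsM : a + (M.erase a).sum = M.sum := by
      have := congrArg Multiset.sum hcons
      rwa [Multiset.sum_cons] at this
    have hsQ : b + (Q.erase b).sum = Q.sum := by
      have := congrArg Multiset.sum hconsQ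
      rwa [Multiset.sum_cons] at this
    calc M.sum = a + (M.erase a).sum := hsM.symm
      _ ≤ b + (Q.erase b).sum := add_le_add hab hsum
      _ = Q.sum := hsQ

lemma struct_pp (G : Type*) [CommGroup G] [Finite G] :
    ∃ (ι : Type) (_ : Fintype ι) (q : ι → ℕ),
      (∀ i, ∃ p e : ℕ, p.Prime ∧ q i = p ^ e) ∧
      Nonempty (G ≃* ∀ i, Multiplicative (ZMod (q i))) := by
  classical
  obtain ⟨ι, hι, p, hp, e, ⟨eqv⟩⟩ := AddCommGroup.equiv_directSum_zmod_of_finite (Additive G)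
  exact ⟨ι, hι, fun i => p i ^ e i, fun i => ⟨p i, e i, hp i, rfl⟩,
    ⟨MulEquiv.toAdditive.symm <| eqv.trans <| (DirectSum.addEquivProd _).trans <|
      MulEquiv.toAdditiveRight <| MulEquiv.piMultiplicative _⟩⟩

/-- Flatten a nested product of monoids into a product over a sigma type. -/
def piSigmaMulEquiv {ι : Type*} {κ : ι → Type*} (M : ∀ i, κ i → Type*)
    [∀ i j, MulOneClass (M i j)] :
    ((i : ι) → (j : κ i) → M i j) ≃* ∀ s : Σ i, κ i, M s.1 s.2 where
  toFun x s := x s.1 s.2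
  invFun x i j := x ⟨i, j⟩
  left_inv x := rfl
  right_inv x := rfl
  map_mul' x y := rfl

lemma exists_embedding_prime_powers (n : ℕ) (G : Type) [CommGroup G] [Finite G]
    (f : G →* Equiv.Perm (Fin n)) (hf : Function.Injective f) :
    ∃ (J : Type) (_ : Fintype J) (q : J → ℕ)
      (φ : G →* ∀ j : J, Multiplicative (ZMod (q j))),
      (∀ j, ∃ p e : ℕ, p.Prime ∧ q j = p ^ e) ∧ Function.Injective φ ∧
      (∑ j : J, if 2 ≤ q j then q j else 0) ≤ n := by
  classical
  letI act : MulAction G (Fin n) := MulAction.compHom _ f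
  have smul_def : ∀ (g : G) (x : Fin n), g • x = f g x := fun g x => rfl
  letI Ω := MulAction.orbitRel.Quotient G (Fin n)
  haveI : Fintype Ω := Fintype.ofFinite _
  haveI : ∀ ω : Ω, Fintype (G ⧸ MulAction.stabilizer G (ω.out : Fin n)) :=
    fun ω => Fintype.ofFinite _
  have hstruct : ∀ ω : Ω, ∃ (ι : Type) (_ : Fintype ι) (q : ι → ℕ),
      (∀ i, ∃ p e : ℕ, p.Prime ∧ q i = p ^ e) ∧
      Nonempty ((G ⧸ MulAction.stabilizer G (ω.out : Fin n)) ≃*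
        ∀ i, Multiplicative (ZMod (q i))) := fun ω => struct_pp _
  choose J hJ q hq he using hstruct
  haveI : ∀ ω, Fintype (J ω) := hJ
  have eqv : ∀ ω : Ω, (G ⧸ MulAction.stabilizer G (ω.out : Fin n)) ≃*
      ∀ i, Multiplicative (ZMod (q ω i)) := fun ω => (he ω).some
  haveI : ∀ ω j, NeZero (q ω j) := fun ω j => by
    obtain ⟨p, e, hp, hqe⟩ := hq ω j
    exact ⟨hqe ▸ pow_ne_zero e hp.ne_zero⟩
  -- the diagonal homomorphism into the product of the quotients
  let φ0 : G →* ∀ ω : Ω, G ⧸ MulAction.stabilizer G (ω.out : Fin n) :=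
    Pi.monoidHom fun ω => QuotientGroup.mk' _
  have hφ0 : Function.Injective φ0 := by
    intro g h hgh
    have key : ∀ g : G, φ0 g = 1 → g = 1 := by
      intro g hg
      have hstab : ∀ ω : Ω, g ∈ MulAction.stabilizer G (ω.out : Fin n) := by
        intro ω
        have : (QuotientGroup.mk' (MulAction.stabilizer G (ω.out : Fin n))) g = 1 :=
          congrFun hg ω
        rwa [← QuotientGroup.ker_mk' (MulAction.stabilizer G (ω.out : Fin n))]
      have hfix : ∀ x : Fin n, g • x = x := by
        intro x
        set ω : Ω := Quotient.mk'' x with hω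
        have hrel : (MulAction.orbitRel G (Fin n)).r ω.out x := by
          apply Quotient.exact'
          show Quotient.mk'' _ = Quotient.mk'' _
          rw [Quotient.out_eq']
        obtain ⟨c, hc⟩ := hrel
        have hgout : g • (ω.out : Fin n) = ω.out := hstab ω
        have : g • (c • x) = c • x := by rw [← hc] at hgout; exact hgout
        calc g • x = (c⁻¹ * c) • (g • x) := by rw [inv_mul_cancel, one_smul]
          _ = c⁻¹ • (g • (c • x)) := by rw [mul_smul, ← smul_comm g c x]
          _ = c⁻¹ • (c • x) := by rw [this]
          _ = x := by rw [← mul_smul, inv_mul_cancel, one_smul]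
      apply hf
      rw [map_one]
      exact Equiv.ext fun x => hfix x
    have := key (g * h⁻¹) (by rw [map_mul, map_inv, hgh, mul_inv_cancel])
    have := mul_inv_eq_one.mp this
    exact this
  -- assemble the full embedding
  refine ⟨(Σ ω : Ω, J ω), inferInstance, fun s => q s.1 s.2,
    ((piSigmaMulEquiv fun ω j => Multiplicative (ZMod (q ω j))).toMonoidHom.comp
      (((MulEquiv.piCongrRight eqv).toMonoidHom).comp φ0)),
    fun s => hq s.1 s.2, ?_, ?_⟩
  · exact (piSigmaMulEquiv _).injective.comp
      ((MulEquiv.piCongrRight eqv).injective.comp hφ0)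
  · -- counting : the sum of the nontrivial q's is at most n
    have hcard : n = ∑ ω : Ω, Nat.card (G ⧸ MulAction.stabilizer G (ω.out : Fin n)) := by
      have e := MulAction.selfEquivSigmaOrbitsQuotientStabilizer G (Fin n)
      calc n = Fintype.card (Fin n) := (Fintype.card_fin n).symm
        _ = Fintype.card (Σ ω : Ω, G ⧸ MulAction.stabilizer G (ω.out : Fin n)) :=
            Fintype.card_congr e
        _ = ∑ ω : Ω, Fintype.card (G ⧸ MulAction.stabilizer G (ω.out : Fin n)) :=
            Fintype.card_sigma
        _ = ∑ ω : Ω, Nat.card (G ⧸ MulAction.stabilizer G (ω.out : Fin n)) :=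
            Finset.sum_congr rfl fun ω _ => (Nat.card_eq_fintype_card).symm
    rw [← Finset.univ_sigma_univ, Finset.sum_sigma, hcard]
    refine Finset.sum_le_sum fun ω _ => ?_
    have h1 : ∑ j : J ω, (if 2 ≤ q ω j then q ω j else 0) =
        ∑ j ∈ univ.filter (fun j => 2 ≤ q ω j), q ω j := (Finset.sum_filter _ _).symm
    rw [h1]
    calc ∑ j ∈ univ.filter (fun j => 2 ≤ q ω j), q ω j
        ≤ ∏ j ∈ univ.filter (fun j => 2 ≤ q ω j), q ω j :=
          sum_le_prod_of_two_le _ _ (fun j hj => (Finset.mem_filter.mp hj).2)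
      _ ≤ ∏ j : J ω, q ω j := by
          refine Finset.prod_le_prod_of_subset_of_one_le' (Finset.filter_subset _ _)
            (fun j _ _ => ?_)
          exact Nat.pos_of_ne_zero (NeZero.ne (q ω j))
      _ = Nat.card (G ⧸ MulAction.stabilizer G (ω.out : Fin n)) := by
          rw [Nat.card_congr (eqv ω).toEquiv, Nat.card_pi]
          refine Finset.prod_congr rfl fun j _ => ?_
          simp [Nat.card_eq_fintype_card, Fintype.card_multiplicative, ZMod.card]

lemma counting_le {k : ℕ} (m : Fin k → ℕ)
    (hm : ∀ i, ∃ p e : ℕ, p.Prime ∧ 0 < e ∧ m i = p ^ e)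
    (J : Type) [Fintype J] (q : J → ℕ)
    (hq : ∀ j, ∃ p e : ℕ, p.Prime ∧ q j = p ^ e)
    (φ : ((i : Fin k) → Multiplicative (ZMod (m i))) →* ∀ j, Multiplicative (ZMod (q j)))
    (hφ : Function.Injective φ) :
    ∑ i, m i ≤ ∑ j : J, if 2 ≤ q j then q j else 0 := by
  classical
  haveI : ∀ i, NeZero (m i) := fun i => by
    obtain ⟨p, e, hp, he, hmi⟩ := hm i
    exact ⟨hmi ▸ pow_ne_zero e hp.ne_zero⟩
  haveI : ∀ j, NeZero (q j) := fun j => by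
    obtain ⟨p, e, hp, hqe⟩ := hq j
    exact ⟨hqe ▸ pow_ne_zero e hp.ne_zero⟩
  -- the key cardinality comparison, for every prime power p ^ t
  have hcount : ∀ p t : ℕ, p.Prime → 0 < t →
      (univ.filter fun i : Fin k => p ^ t ∣ m i).card ≤
        (univ.filter fun j : J => p ^ t ∣ q j).card := by
    intro p t hp ht
    have h1 := pow_card_le_pSet m (fun i => NeZero.ne (m i)) p t hp ht
    have h2 := pSet_card_le_of_injective φ hφ p (p ^ (t - 1))
    have h3 := card_pSet_pi_le q hq p t hp ht
    have := h1.trans (h2.trans h3)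
    exact (Nat.pow_le_pow_iff_right hp.one_lt).mp this
  -- pass to multisets
  have hsum := multiset_trace_le (Multiset.card (univ.val.map m))
    (univ.val.map m) ((univ.filter fun j : J => 2 ≤ q j).val.map q) le_rfl
    (by
      intro a ha
      obtain ⟨i, _, rfl⟩ := Multiset.mem_map.mp ha
      exact hm i)
    (by
      intro a ha
      obtain ⟨j, _, rfl⟩ := Multiset.mem_map.mp ha
      exact hq j)
    (by
      intro p t hp ht
      have hMc : Multiset.countP (p ^ t ∣ ·) (univ.val.map m) =
          (univ.filter fun i : Fin k => p ^ t ∣ m i).card := by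
        rw [Multiset.countP_map]
        rfl
      have hQc : Multiset.countP (p ^ t ∣ ·) ((univ.filter fun j : J => 2 ≤ q j).val.map q) =
          (univ.filter fun j : J => p ^ t ∣ q j).card := by
        rw [Multiset.countP_map]
        have hval : Multiset.filter (fun a => p ^ t ∣ q a) (univ.filter fun j : J => 2 ≤ q j).val =
            ((univ.filter fun j : J => 2 ≤ q j).filter fun j => p ^ t ∣ q j).val := by
          simp [Finset.filter_val]
        rw [hval]
        have heq : ((univ.filter fun j : J => 2 ≤ q j).filter fun j => p ^ t ∣ q j) =
            univ.filter fun j : J => p ^ t ∣ q j := by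
          rw [Finset.filter_filter]
          refine Finset.filter_congr fun j _ => ?_
          constructor
          · exact fun h => h.2
          · intro h
            refine ⟨?_, h⟩
            have h2t : 2 ≤ p ^ t := by
              calc 2 ≤ p := hp.two_le
                _ = p ^ 1 := (pow_one p).symm
                _ ≤ p ^ t := Nat.pow_le_pow_right hp.pos ht
            exact le_trans h2t (Nat.le_of_dvd (Nat.pos_of_ne_zero (NeZero.ne (q j))) h)
        rw [heq]
        rfl
      rw [hMc, hQc]
      exact hcount p t hp ht)
  -- translate back
  have hM : ∑ i, m i = (univ.val.map m).sum := rfl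
  have hQ2 : ((univ.filter fun j : J => 2 ≤ q j).val.map q).sum =
      ∑ j ∈ univ.filter (fun j : J => 2 ≤ q j), q j := rfl
  rw [hM]
  refine hsum.trans ?_
  rw [hQ2, ← Finset.sum_filter]

/-- If `A ≅ ℤ/m₁ × ⋯ × ℤ/m_k` with each `m_i` a prime power embeds into `S_n`,
then `Tr(A) = m₁ + ⋯ + m_k ≤ n`. -/
theorem trace_le_of_embedding_symmetric (n k : ℕ) (m : Fin k → ℕ)
    (hm : ∀ i, ∃ p e : ℕ, p.Prime ∧ 0 < e ∧ m i = p ^ e)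
    (f : ((i : Fin k) → Multiplicative (ZMod (m i))) →* Equiv.Perm (Fin n))
    (hf : Function.Injective f) :
    ∑ i, m i ≤ n := by
  classical
  haveI : ∀ i, NeZero (m i) := fun i => by
    obtain ⟨p, e, hp, he, hmi⟩ := hm i
    exact ⟨hmi ▸ pow_ne_zero e hp.ne_zero⟩
  obtain ⟨J, hJ, q, φ, hq, hφ, hle⟩ := exists_embedding_prime_powers n _ f hf
  exact le_trans (counting_le m hm J q hq φ hφ) hle
end

section
/- The maximal order of an abelian subgroup of the hyperoctahedral group of rank r (the group of signed permutations of {1,…,r}, i.e., the Weyl group of type B_r) is 2^r, and every abelian subgroup of this order is isomorphic to (Z/2)^s × (Z/4)^t with s + 2t = r. -/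
/-!
Adjoin the central fixed-point-free involution `ν = negSwap r` to an abelian subgroup `M` of
`B_r`: the result `N` is an abelian group acting faithfully on the `2r` signed letters. An abelian
group acts on each orbit through a quotient of the size of the orbit, so faithfulness embeds `N`
into the product of these quotients and `|N| ≤ ∏ |O|`. Every orbit `O` is stable under `ν`, which
has no fixed points, so `|O| = 2m` is even, and `2m ≤ 2^m`; hence `|M| ≤ |N| ≤ ∏ 2^{|O|/2} = 2^r`,
and the sign changes attain this. In the equality case `2m = 2^m` for every orbit, so all orbits
have size 2 or 4 and every element has order dividing 4; the structure theorem for finite abelian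
groups then gives `M ≅ (ℤ/2)^s × (ℤ/4)^t`, with `s + 2t = r` by counting.
-/

/-- Negation of the signed set `{±1, …, ±r}`, modelled as `Fin r × ZMod 2`. -/
def negSwap (r : ℕ) : Equiv.Perm (Fin r × ZMod 2) :=
  Equiv.prodCongr (Equiv.refl (Fin r)) (Equiv.addLeft (1 : ZMod 2))

/-- The hyperoctahedral group of rank `r` (the Weyl group of type `B_r`), as the
group of permutations of `{±1, …, ±r}` commuting with negation. -/
def hyperoctahedral (r : ℕ) : Subgroup (Equiv.Perm (Fin r × ZMod 2)) :=
  Subgroup.centralizer {negSwap r}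

theorem Nat.two_mul_lt_two_pow {m : ℕ} (hm : 3 ≤ m) : 2 * m < 2 ^ m := by
  induction m, hm using Nat.le_induction with
  | base => norm_num
  | succ k hk ih =>
    have h2 : 2 ≤ 2 ^ k := le_self_pow₀ one_le_two (by omega)
    rw [pow_succ]
    omega

theorem Nat.le_two_pow_div_two {n : ℕ} (hn : Even n) : n ≤ 2 ^ (n / 2) := by
  obtain ⟨m, rfl⟩ := hn
  rw [← two_mul, Nat.mul_div_cancel_left m two_pos]
  rcases lt_or_ge m 3 with hm | hm
  · interval_cases m <;> norm_num
  · exact (two_mul_lt_two_pow hm).le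

theorem Nat.lt_two_pow_div_two {n : ℕ} (hn : Even n) (h4 : 4 < n) : n < 2 ^ (n / 2) := by
  obtain ⟨m, rfl⟩ := hn
  rw [← two_mul, Nat.mul_div_cancel_left m two_pos]
  exact two_mul_lt_two_pow (by omega)

namespace MulAction

variable {G X : Type*} [Group G] [MulAction G X]

theorem pow_card_orbit_smul [IsMulCommutative G] (g : G) (x : X) :
    g ^ Nat.card (orbit G x) • x = x := by
  rw [Nat.card_coe_set_eq, ← index_stabilizer]
  exact (stabilizer G x).pow_index_mem g

theorem two_dvd_card_orbit [IsMulCommutative G] {ν : G} (hν2 : ν ^ 2 = 1)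
    (hν : ∀ x : X, ν • x ≠ x) (x : X) : 2 ∣ Nat.card (orbit G x) := by
  have hord : orderOf (ν : G ⧸ stabilizer G x) = 2 :=
    orderOf_eq_prime (by rw [← QuotientGroup.mk_pow, hν2, QuotientGroup.mk_one])
      (by rw [Ne, QuotientGroup.eq_one_iff]; exact hν x)
  rw [Nat.card_coe_set_eq, ← index_stabilizer, ← hord]
  exact orderOf_dvd_natCard _

theorem orbitRel.Quotient.two_dvd_card_orbit [IsMulCommutative G] {ν : G} (hν2 : ν ^ 2 = 1)
    (hν : ∀ x : X, ν • x ≠ x) (ω : orbitRel.Quotient G X) : 2 ∣ Nat.card ω.orbit := by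
  rw [orbitRel.Quotient.orbit_eq_orbit_out ω Quotient.out_eq']
  exact MulAction.two_dvd_card_orbit hν2 hν _

theorem card_le_prod_card_orbit [IsMulCommutative G] [Finite X] [FaithfulSMul G X]
    [Fintype (orbitRel.Quotient G X)] :
    Nat.card G ≤ ∏ ω : orbitRel.Quotient G X, Nat.card ω.orbit := by
  rw [← Nat.card_pi]
  refine Nat.card_le_card_of_injective (fun g ω => g • (⟨ω.out, ?_⟩ : ω.orbit)) ?_
  · rw [orbitRel.Quotient.mem_orbit, Quotient.out_eq']
  intro g g' h
  refine FaithfulSMul.eq_of_smul_eq_smul (α := X) fun x => ?_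
  obtain ⟨k, hk⟩ : x ∈ orbit G (Quotient.mk'' x : orbitRel.Quotient G X).out := by
    rw [← orbitRel.Quotient.orbit_eq_orbit_out _ Quotient.out_eq', orbitRel.Quotient.mem_orbit]
  have h' := congrArg Subtype.val (congrFun h (Quotient.mk'' x))
  simp only [orbitRel.Quotient.orbit.coe_smul] at h'
  rw [← hk, smul_smul, smul_smul, mul_comm' g, mul_comm' g', mul_smul, mul_smul, h']

theorem sum_card_orbit [Finite X] [Fintype (orbitRel.Quotient G X)] :
    ∑ ω : orbitRel.Quotient G X, Nat.card ω.orbit = Nat.card X := by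
  rw [← Nat.card_sigma, Nat.card_congr (selfEquivSigmaOrbits' G X)]

theorem prod_two_pow_card_orbit_div_two [Finite X] [Fintype (orbitRel.Quotient G X)]
    (heven : ∀ ω : orbitRel.Quotient G X, 2 ∣ Nat.card ω.orbit) :
    ∏ ω : orbitRel.Quotient G X, 2 ^ (Nat.card ω.orbit / 2) = 2 ^ (Nat.card X / 2) := by
  rw [Finset.prod_pow_eq_pow_sum, ← sum_card_orbit (G := G),
    Nat.sum_div fun ω _ => heven ω]

theorem card_le_two_pow_of_fixedPointFree_involution [IsMulCommutative G] [Finite X]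
    [FaithfulSMul G X] {ν : G} (hν2 : ν ^ 2 = 1) (hν : ∀ x : X, ν • x ≠ x) :
    Nat.card G ≤ 2 ^ (Nat.card X / 2) := by
  let := Fintype.ofFinite (orbitRel.Quotient G X)
  have heven := fun ω : orbitRel.Quotient G X => ω.two_dvd_card_orbit hν2 hν
  calc Nat.card G ≤ ∏ ω : orbitRel.Quotient G X, Nat.card ω.orbit := card_le_prod_card_orbit
    _ ≤ ∏ ω : orbitRel.Quotient G X, 2 ^ (Nat.card ω.orbit / 2) :=
      Finset.prod_le_prod' fun ω _ => Nat.le_two_pow_div_two (even_iff_two_dvd.mpr (heven ω))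
    _ = 2 ^ (Nat.card X / 2) := prod_two_pow_card_orbit_div_two heven

theorem card_orbit_dvd_four_of_card_eq [IsMulCommutative G] [Finite X] [FaithfulSMul G X]
    {ν : G} (hν2 : ν ^ 2 = 1) (hν : ∀ x : X, ν • x ≠ x)
    (hcard : Nat.card G = 2 ^ (Nat.card X / 2)) (x : X) : Nat.card (orbit G x) ∣ 4 := by
  let := Fintype.ofFinite (orbitRel.Quotient G X)
  have heven := fun ω : orbitRel.Quotient G X => ω.two_dvd_card_orbit hν2 hν
  have hpos : 0 < Nat.card (orbit G x) := (Set.ncard_pos).2 (nonempty_orbit x)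
  suffices h4 : Nat.card (orbit G x) ≤ 4 by
    obtain ⟨m, hm⟩ := two_dvd_card_orbit hν2 hν x
    obtain rfl | rfl : m = 1 ∨ m = 2 := by omega
    all_goals simp [hm]
  by_contra! h4
  have hlt : ∏ ω : orbitRel.Quotient G X, Nat.card ω.orbit
      < ∏ ω : orbitRel.Quotient G X, 2 ^ (Nat.card ω.orbit / 2) := by
    refine Finset.prod_lt_prod (fun ω _ => (Set.ncard_pos).2 ω.nonempty_orbit)
      (fun ω _ => Nat.le_two_pow_div_two (even_iff_two_dvd.mpr (heven ω)))
      ⟨Quotient.mk'' x, Finset.mem_univ _, ?_⟩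
    rw [orbitRel.Quotient.orbit_mk]
    exact Nat.lt_two_pow_div_two (even_iff_two_dvd.mpr (two_dvd_card_orbit hν2 hν x)) h4
  have hle := card_le_prod_card_orbit (G := G) (X := X)
  rw [prod_two_pow_card_orbit_div_two heven, ← hcard] at hlt
  omega

theorem pow_four_eq_one_of_card_eq [IsMulCommutative G] [Finite X] [FaithfulSMul G X]
    {ν : G} (hν2 : ν ^ 2 = 1) (hν : ∀ x : X, ν • x ≠ x)
    (hcard : Nat.card G = 2 ^ (Nat.card X / 2)) (g : G) : g ^ 4 = 1 := by
  refine FaithfulSMul.eq_of_smul_eq_smul (α := X) fun x => ?_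
  obtain ⟨k, hk⟩ := card_orbit_dvd_four_of_card_eq hν2 hν hcard x
  have hstab : g ^ Nat.card (orbit G x) ∈ stabilizer G x := pow_card_orbit_smul g x
  rw [one_smul, hk, pow_mul]
  exact pow_mem hstab k

end MulAction

namespace Subgroup

variable {H : Type*} [Group H]

theorem isMulCommutative_closure_insert {ν : H} {M : Subgroup H} [IsMulCommutative M]
    (hν : ν ∈ centralizer M) : IsMulCommutative (closure (insert ν (M : Set H))) := by
  refine isMulCommutative_closure ?_
  rintro x (rfl | hx) y (rfl | hy)
  · rfl
  · exact (hν y hy).symm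
  · exact hν x hx
  · exact setLike_mul_comm hx hy

variable {X : Type*} [MulAction H X] [Finite X] [FaithfulSMul H X]

theorem card_le_two_pow_of_fixedPointFree_involution {ν : H} (hν2 : ν ^ 2 = 1)
    (hν : ∀ x : X, ν • x ≠ x) {M : Subgroup H} [IsMulCommutative M] (hνM : ν ∈ centralizer M) :
    Nat.card M ≤ 2 ^ (Nat.card X / 2) := by
  set N := closure (insert ν (M : Set H))
  have := isMulCommutative_closure_insert hνM
  have : Finite N := Finite.of_injective _ (MulAction.toPerm_injective (α := N) (β := X))
  calc Nat.card M ≤ Nat.card N := card_le_of_le (subset_closure.trans' (Set.subset_insert _ _))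
    _ ≤ 2 ^ (Nat.card X / 2) :=
      MulAction.card_le_two_pow_of_fixedPointFree_involution (G := N)
        (ν := ⟨ν, subset_closure (Set.mem_insert _ _)⟩) (Subtype.ext hν2) (fun x => hν x)

theorem pow_four_eq_one_of_card_eq {ν : H} (hν2 : ν ^ 2 = 1)
    (hν : ∀ x : X, ν • x ≠ x) {M : Subgroup H} [IsMulCommutative M] (hνM : ν ∈ centralizer M)
    (hcard : Nat.card M = 2 ^ (Nat.card X / 2)) (m : M) : m ^ 4 = 1 := by
  set N := closure (insert ν (M : Set H))
  have := isMulCommutative_closure_insert hνM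
  have : Finite N := Finite.of_injective _ (MulAction.toPerm_injective (α := N) (β := X))
  have hMN : M ≤ N := subset_closure.trans' (Set.subset_insert _ _)
  have hνN : ν ∈ N := subset_closure (Set.mem_insert _ _)
  have hN : Nat.card N = 2 ^ (Nat.card X / 2) :=
    le_antisymm (MulAction.card_le_two_pow_of_fixedPointFree_involution (G := N)
        (ν := ⟨ν, hνN⟩) (Subtype.ext hν2) (fun x => hν x)) (hcard ▸ card_le_of_le hMN)
  have h := MulAction.pow_four_eq_one_of_card_eq (G := N) (ν := ⟨ν, hνN⟩) (Subtype.ext hν2)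
    (fun x => hν x) hN ⟨m, hMN m.2⟩
  exact Subtype.ext (by simpa using congrArg Subtype.val h)

end Subgroup

def MulEquiv.piEquivPiSubtypeProd {ι : Type*} (p : ι → Prop) [DecidablePred p]
    (P : ι → Type*) [∀ i, Mul (P i)] :
    (∀ i, P i) ≃* (∀ i : {i // p i}, P i) × ∀ i : {i // ¬p i}, P i :=
  { Equiv.piEquivPiSubtypeProd p P with map_mul' := fun _ _ => rfl }

def ZMod.multiplicativeCongr {a b : ℕ} (h : a = b) :
    Multiplicative (ZMod a) ≃* Multiplicative (ZMod b) :=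
  (ZMod.ringEquivCongr h).toAddEquiv.toMultiplicative

theorem ZMod.dvd_of_forall_pow_eq_one {n k : ℕ} (h : ∀ x : Multiplicative (ZMod n), x ^ k = 1) :
    n ∣ k := by
  simpa [orderOf_ofAdd_eq_addOrderOf] using orderOf_dvd_of_pow_eq_one (h (.ofAdd 1))

noncomputable def mulEquivPiZModTwoProdPiZModFour {ι : Type*} [Fintype ι] (n : ι → ℕ)
    (hn : ∀ i, n i = 2 ∨ n i = 4) :
    (∀ i, Multiplicative (ZMod (n i))) ≃*
      (Fin (Fintype.card {i // n i = 2}) → Multiplicative (ZMod 2)) ×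
        (Fin (Fintype.card {i // ¬n i = 2}) → Multiplicative (ZMod 4)) :=
  (MulEquiv.piEquivPiSubtypeProd (n · = 2) _).trans <| MulEquiv.prodCongr
    ((MulEquiv.piCongrRight fun i => ZMod.multiplicativeCongr i.2).trans
      (MulEquiv.arrowCongr (Fintype.equivFin _) (MulEquiv.refl _)))
    ((MulEquiv.piCongrRight fun i : {i // ¬n i = 2} =>
        ZMod.multiplicativeCongr ((hn i).resolve_left i.2)).trans
      (MulEquiv.arrowCongr (Fintype.equivFin _) (MulEquiv.refl _)))

open scoped IsMulCommutative in
theorem exists_mulEquiv_pi_zmod_two_prod_pi_zmod_four {G : Type*} [Group G]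
    [IsMulCommutative G] {r : ℕ} (hcard : Nat.card G = 2 ^ r) (hexp : ∀ g : G, g ^ 4 = 1) :
    ∃ s t : ℕ, s + 2 * t = r ∧
      Nonempty (G ≃* ((Fin s → Multiplicative (ZMod 2)) × (Fin t → Multiplicative (ZMod 4)))) := by
  classical
  have : Finite G := Nat.finite_of_card_ne_zero (by rw [hcard]; positivity)
  obtain ⟨ι, _, n, hn1, ⟨e⟩⟩ := CommGroup.equiv_prod_multiplicative_zmod_of_finite G
  have hn4 (i : ι) : n i ∣ 4 := ZMod.dvd_of_forall_pow_eq_one fun x => by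
    simpa using congrFun (congrArg e (hexp (e.symm (Pi.mulSingle i x)))) i
  have hn (i : ι) : n i = 2 ∨ n i = 4 := by
    have h4 := hn4 i
    have := hn1 i
    have := Nat.le_of_dvd four_pos h4
    interval_cases n i <;> omega
  set f := e.trans (mulEquivPiZModTwoProdPiZModFour n hn)
  refine ⟨_, _, ?_, ⟨f⟩⟩
  apply Nat.pow_right_injective le_rfl
  simp [← hcard, Nat.card_congr f.toEquiv, pow_add, pow_mul]

namespace hyperoctahedral

variable (r : ℕ)

def neg : hyperoctahedral r := ⟨negSwap r, Subgroup.mem_centralizer_singleton_iff.2 rfl⟩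

theorem neg_sq : neg r ^ 2 = 1 := by
  ext p
  · rfl
  · simp [neg, negSwap, sq, ← add_assoc, CharTwo.add_self_eq_zero]

theorem neg_smul_ne (p : Fin r × ZMod 2) : neg r • p ≠ p := by
  intro h
  have := congrArg Prod.snd h
  simp [neg, negSwap, Subgroup.smul_def] at this

theorem neg_mem_center : neg r ∈ Subgroup.center (hyperoctahedral r) :=
  Subgroup.mem_center_iff.2 fun g => Subtype.ext (g.2 _ rfl).symm

def signFlip : Multiplicative (Fin r → ZMod 2) →* Equiv.Perm (Fin r × ZMod 2) where
  toFun f := Equiv.prodShear (Equiv.refl _) fun i => Equiv.addLeft (f.toAdd i)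
  map_one' := by ext <;> simp
  map_mul' f g := by ext <;> simp

theorem signFlip_injective : Function.Injective (signFlip r) := by
  refine (injective_iff_map_eq_one _).2 fun f hf => ?_
  ext i
  simpa [signFlip] using congrArg Prod.snd (Equiv.ext_iff.1 hf (i, 0))

theorem signFlip_mem (f : Multiplicative (Fin r → ZMod 2)) : signFlip r f ∈ hyperoctahedral r := by
  refine Subgroup.mem_centralizer_singleton_iff.2 ?_
  ext p
  · rfl
  · simp [signFlip, negSwap, add_left_comm]

def signFlips : Subgroup (hyperoctahedral r) :=
  ((signFlip r).codRestrict _ (signFlip_mem r)).range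

theorem card_signFlips : Nat.card (signFlips r) = 2 ^ r := by
  have hinj : Function.Injective ((signFlip r).codRestrict _ (signFlip_mem r)) :=
    fun _ _ h => signFlip_injective r (congrArg Subtype.val h)
  rw [signFlips, ← Nat.card_congr (MonoidHom.ofInjective hinj).toEquiv]
  simp

instance : IsMulCommutative (signFlips r) := by unfold signFlips; infer_instance

theorem card_le_of_isMulCommutative (M : Subgroup (hyperoctahedral r)) [IsMulCommutative M] :
    Nat.card M ≤ 2 ^ r :=
  (Subgroup.card_le_two_pow_of_fixedPointFree_involution (neg_sq r) (neg_smul_ne r)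
    (Subgroup.center_le_centralizer M (neg_mem_center r))).trans_eq (by simp)

theorem pow_four_eq_one_of_card_eq (M : Subgroup (hyperoctahedral r)) [IsMulCommutative M]
    (hcard : Nat.card M = 2 ^ r) (m : M) : m ^ 4 = 1 :=
  Subgroup.pow_four_eq_one_of_card_eq (neg_sq r) (neg_smul_ne r)
    (Subgroup.center_le_centralizer M (neg_mem_center r)) (by simp [hcard]) m

end hyperoctahedral

/-- The maximal order of an abelian subgroup of the hyperoctahedral group of rank
`r` is `2^r`, and every abelian subgroup of this order is isomorphic to
`(ℤ/2)^s × (ℤ/4)^t` with `s + 2t = r`. -/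
theorem maximal_abelian_hyperoctahedral (r : ℕ) :
    IsGreatest {m : ℕ | ∃ M : Subgroup (hyperoctahedral r),
        (∀ a b : M, a * b = b * a) ∧ Nat.card M = m} (2 ^ r) ∧
    ∀ M : Subgroup (hyperoctahedral r), (∀ a b : M, a * b = b * a) →
      Nat.card M = 2 ^ r →
      ∃ s t : ℕ, s + 2 * t = r ∧
        Nonempty (M ≃* ((Fin s → Multiplicative (ZMod 2)) ×
          (Fin t → Multiplicative (ZMod 4)))) := by
  refine ⟨⟨⟨hyperoctahedral.signFlips r, fun a b => mul_comm' a b,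
    hyperoctahedral.card_signFlips r⟩, ?_⟩, fun M hM hcard => ?_⟩
  · rintro _ ⟨M, hM, rfl⟩
    have := IsMulCommutative.of_comm hM
    exact hyperoctahedral.card_le_of_isMulCommutative r M
  · have := IsMulCommutative.of_comm hM
    exact exists_mulEquiv_pi_zmod_two_prod_pi_zmod_four hcard
      (hyperoctahedral.pow_four_eq_one_of_card_eq r M hcard)
end

section
/- The maximal order of an abelian subgroup of the Weyl group W(D_r) for odd r equals 2^(r-1). -/
/-- The Weyl group of type `D_r`: signed permutations with an even number of sign
changes, i.e. those that are even as permutations of the `2r` points. -/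
def weylD (r : ℕ) : Subgroup (hyperoctahedral r) :=
  MonoidHom.ker (Equiv.Perm.sign.comp (hyperoctahedral r).subtype)

open Equiv Equiv.Perm MulAction

namespace WeylDAux

variable {r : ℕ}

def dPerm (δ : Fin r → ZMod 2) : Perm (Fin r × ZMod 2) :=
  prodCongrRight fun i => Equiv.addLeft (δ i)

lemma dPerm_apply (δ : Fin r → ZMod 2) (p : Fin r × ZMod 2) :
    dPerm δ p = (p.1, δ p.1 + p.2) := rfl

lemma negSwap_eq : negSwap r = dPerm (fun _ => 1) := by
  ext p <;> rfl

lemma dPerm_mul (δ δ' : Fin r → ZMod 2) : dPerm δ * dPerm δ' = dPerm (δ + δ') := by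
  ext p <;> simp [dPerm_apply, Perm.mul_apply, add_assoc]

lemma dPerm_zero : dPerm (0 : Fin r → ZMod 2) = 1 := by
  ext p <;> simp [dPerm_apply]

lemma dPerm_injective : Function.Injective (dPerm (r := r)) := by
  intro δ δ' h
  funext i
  have := congrArg (fun g : Perm (Fin r × ZMod 2) => (g (i, 0)).2) h
  simpa [dPerm_apply] using this

lemma sign_addLeft_zmod (c : ZMod 2) : Perm.sign (Equiv.addLeft c) = (-1 : ℤˣ) ^ c.val := by
  revert c; decide

lemma sign_dPerm (δ : Fin r → ZMod 2) :
    Perm.sign (dPerm δ) = (-1 : ℤˣ) ^ (∑ i, (δ i).val) := by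
  rw [dPerm, sign_prodCongrRight, ← Finset.prod_pow_eq_pow_sum]
  exact Finset.prod_congr rfl fun i _ => sign_addLeft_zmod (δ i)

lemma sign_dPerm_of_even (δ : Fin r → ZMod 2) (h : ∑ i, δ i = 0) :
    Perm.sign (dPerm δ) = 1 := by
  rw [sign_dPerm]
  have h2 : ((∑ i, (δ i).val : ℕ) : ZMod 2) = ∑ i, δ i := by
    push_cast [ZMod.natCast_val, ZMod.cast_id]
    rfl
  have : (2 : ℕ) ∣ ∑ i, (δ i).val := by
    rw [← ZMod.natCast_eq_zero_iff, h2, h]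
  exact Even.neg_one_pow (even_iff_two_dvd.mpr this)

lemma sign_negSwap (hodd : Odd r) : Perm.sign (negSwap r) = -1 := by
  rw [negSwap_eq, sign_dPerm]
  have : (∑ _i : Fin r, ((1 : ZMod 2)).val) = r := by simp [ZMod.val_one]
  rw [this, Odd.neg_one_pow hodd]

lemma negSwap_mul_negSwap : negSwap r * negSwap r = 1 := by
  rw [negSwap_eq, dPerm_mul]
  have : ((fun _ => 1) + fun _ => 1 : Fin r → ZMod 2) = 0 := by funext i; show (1 + 1 : ZMod 2) = 0; decide
  rw [this, dPerm_zero]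

lemma dPerm_mem_hyper (δ : Fin r → ZMod 2) : dPerm δ ∈ hyperoctahedral r := by
  rw [hyperoctahedral, Subgroup.mem_centralizer_iff]
  rintro g rfl
  · rw [negSwap_eq, dPerm_mul, dPerm_mul, add_comm]

lemma commute_negSwap {g : Perm (Fin r × ZMod 2)} (hg : g ∈ hyperoctahedral r) :
    negSwap r * g = g * negSwap r :=
  hg (negSwap r) rfl

end WeylDAux

namespace WeylDAux

variable (r : ℕ)

def sumHom : (Fin r → ZMod 2) →+ ZMod 2 where
  toFun δ := ∑ i, δ i
  map_zero' := by simp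
  map_add' := by intro a b; simp [Finset.sum_add_distrib]

lemma zmod2_add_self (a : ZMod 2) : a + a = 0 := by revert a; decide

lemma dPerm_self_mul (δ : Fin r → ZMod 2) : dPerm δ * dPerm δ = 1 := by
  rw [dPerm_mul]
  have : δ + δ = 0 := funext fun i => zmod2_add_self _
  rw [this, dPerm_zero]

lemma dPerm_inv (δ : Fin r → ZMod 2) : (dPerm δ)⁻¹ = dPerm δ :=
  inv_eq_of_mul_eq_one_right (dPerm_self_mul r δ)

lemma dPerm_mem_weyl (δ : Fin r → ZMod 2) (h : ∑ i, δ i = 0) :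
    (⟨dPerm δ, dPerm_mem_hyper δ⟩ : hyperoctahedral r) ∈ weylD r := by
  rw [weylD, MonoidHom.mem_ker]
  exact sign_dPerm_of_even δ h

def evenDiag : Subgroup (weylD r) where
  carrier := {g | ∃ δ : Fin r → ZMod 2, ∑ i, δ i = 0 ∧
    ((g : hyperoctahedral r) : Perm (Fin r × ZMod 2)) = dPerm δ}
  one_mem' := ⟨0, by simp, by simp [dPerm_zero]⟩
  mul_mem' := by
    rintro a b ⟨δ, h0, hδ⟩ ⟨δ', h0', hδ'⟩
    exact ⟨δ + δ', by simp [Finset.sum_add_distrib, h0, h0'],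
      by push_cast; rw [hδ, hδ', dPerm_mul]⟩
  inv_mem' := by
    rintro a ⟨δ, h0, hδ⟩
    refine ⟨δ, h0, ?_⟩
    push_cast
    rw [hδ, dPerm_inv]

lemma evenDiag_comm : ∀ a b : evenDiag r, a * b = b * a := by
  rintro ⟨a, δ, h0, hδ⟩ ⟨b, δ', h0', hδ'⟩
  apply Subtype.ext; apply Subtype.ext; apply Subtype.ext
  show ((a : hyperoctahedral r) : Perm (Fin r × ZMod 2)) * b = (b : hyperoctahedral r) * a
  rw [hδ, hδ', dPerm_mul, dPerm_mul, add_comm]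

lemma card_evenDiag (hr : 3 ≤ r) (hodd : Odd r) : Nat.card (evenDiag r) = 2 ^ (r - 1) := by
  classical
  -- the kernel of sumHom
  have hsurj : Function.Surjective (sumHom r) := by
    intro y
    refine ⟨fun _ => y, ?_⟩
    show (∑ _i : Fin r, y) = y
    rw [Finset.sum_const, Finset.card_univ, Fintype.card_fin, nsmul_eq_mul]
    have : (r : ZMod 2) = 1 := by
      rw [← ZMod.natCast_mod, Nat.odd_iff.mp hodd]; rfl
    rw [this, one_mul]
  have hbij : Function.Bijective (fun δ : (sumHom r).ker =>
      (⟨⟨⟨dPerm δ.1, dPerm_mem_hyper δ.1⟩, dPerm_mem_weyl r δ.1 δ.2⟩,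
        ⟨δ.1, δ.2, rfl⟩⟩ : evenDiag r)) := by
    constructor
    · intro x y h
      apply Subtype.ext
      apply dPerm_injective
      exact congrArg (fun g : evenDiag r => ((g : weylD r) : hyperoctahedral r).1 : _) h
    · rintro ⟨g, δ, h0, hδ⟩
      refine ⟨⟨δ, h0⟩, ?_⟩
      apply Subtype.ext; apply Subtype.ext; apply Subtype.ext
      exact hδ.symm
  have hk : Nat.card ((sumHom r).ker) = 2 ^ (r - 1) := by
    have h1 : Nat.card (Fin r → ZMod 2) = 2 ^ r := by
      simp [Nat.card_pi, Nat.card_zmod]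
    have h2 : Nat.card (Fin r → ZMod 2) =
        Nat.card ((Fin r → ZMod 2) ⧸ (sumHom r).ker) * Nat.card ((sumHom r).ker) :=
      AddSubgroup.card_eq_card_quotient_mul_card_addSubgroup _
    have h3 : Nat.card ((Fin r → ZMod 2) ⧸ (sumHom r).ker) = 2 := by
      rw [Nat.card_congr (QuotientAddGroup.quotientKerEquivOfSurjective (sumHom r) hsurj).toEquiv]
      simp [Nat.card_zmod]
    rw [h1, h3] at h2
    have hre : 2 ^ r = 2 * 2 ^ (r - 1) := by
      conv_lhs => rw [← Nat.sub_add_cancel (by omega : 1 ≤ r)]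
      rw [pow_succ, mul_comm]
    omega
  rw [← Nat.card_eq_of_bijective _ hbij, hk]

end WeylDAux

namespace WeylDAux

open MulAction

lemma two_mul_le_two_pow : ∀ k : ℕ, 1 ≤ k → 2 * k ≤ 2 ^ k := by
  intro k
  induction k with
  | zero => omega
  | succ n ih =>
    intro _
    rcases Nat.eq_or_lt_of_le (Nat.zero_le n) with h | h
    · simp [← h]
    · have h1 : 2 * n ≤ 2 ^ n := ih h
      have h2 : 2 ≤ 2 ^ n := by
        calc 2 ≤ 2 * n := by omega
        _ ≤ 2 ^ n := h1
      rw [pow_succ]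
      omega

lemma abelian_card_le_two_pow {α : Type} [Fintype α] (A : Subgroup (Equiv.Perm α))
    (hcomm : ∀ a b : A, a * b = b * a)
    (ν : Equiv.Perm α) (hν : ν ∈ A) (hν2 : ν * ν = 1) (hνfree : ∀ x : α, ν x ≠ x)
    (n : ℕ) (hn : Nat.card α = 2 * n) :
    Nat.card A ≤ 2 ^ n := by
  classical
  letI : Fintype (orbitRel.Quotient A α) := Fintype.ofFinite _
  set Ω := orbitRel.Quotient A α with hΩ
  set f : Ω → ℕ := fun ω => Nat.card (orbit A (Quotient.out ω)) with hf
  -- Step 1 : injection of A into the product of the orbits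
  have hinj : Function.Injective (fun (g : A) (ω : Ω) =>
      (⟨g • Quotient.out ω, mem_orbit _ g⟩ : orbit A (Quotient.out ω))) := by
    intro g1 g2 h
    have key : ∀ x : α, g1 • x = g2 • x := by
      intro x
      have h1 : (Quotient.mk'' x : Ω) = Quotient.mk'' (Quotient.out (Quotient.mk'' x : Ω)) :=
        (Quotient.out_eq' _).symm
      have h2 := Quotient.eq''.mp h1
      rw [MulAction.orbitRel_apply] at h2
      obtain ⟨h₀, hh⟩ := h2
      have hh' : h₀ • Quotient.out (Quotient.mk'' x : Ω) = x := hh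
      have hω : g1 • Quotient.out (Quotient.mk'' x : Ω)
          = g2 • Quotient.out (Quotient.mk'' x : Ω) :=
        congrArg Subtype.val (congrFun h (Quotient.mk'' x))
      have main : g1 • h₀ • Quotient.out (Quotient.mk'' x : Ω)
          = g2 • h₀ • Quotient.out (Quotient.mk'' x : Ω) := by
        calc g1 • h₀ • Quotient.out (Quotient.mk'' x : Ω)
            = (g1 * h₀) • Quotient.out (Quotient.mk'' x : Ω) := smul_smul _ _ _
          _ = (h₀ * g1) • Quotient.out (Quotient.mk'' x : Ω) := by rw [hcomm]
          _ = h₀ • g1 • Quotient.out (Quotient.mk'' x : Ω) := (smul_smul _ _ _).symm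
          _ = h₀ • g2 • Quotient.out (Quotient.mk'' x : Ω) := by rw [hω]
          _ = (h₀ * g2) • Quotient.out (Quotient.mk'' x : Ω) := smul_smul _ _ _
          _ = (g2 * h₀) • Quotient.out (Quotient.mk'' x : Ω) := by rw [hcomm]
          _ = g2 • h₀ • Quotient.out (Quotient.mk'' x : Ω) := (smul_smul _ _ _).symm
      rw [hh'] at main
      exact main
    apply Subtype.ext
    apply Equiv.ext
    intro x
    exact key x
  have h1 : Nat.card A ≤ ∏ ω : Ω, f ω := by
    rw [hf, ← Nat.card_pi]
    exact Nat.card_le_card_of_injective _ hinj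
  -- Step 2 : each orbit has even cardinality
  have heven : ∀ ω : Ω, Even (f ω) := by
    intro ω
    set x := Quotient.out ω with hx
    set S := stabilizer A x with hS
    haveI : S.Normal := by
      constructor
      intro m hm g
      have : g * m * g⁻¹ = m := by
        rw [hcomm g m, mul_assoc, mul_inv_cancel, mul_one]
      rwa [this]
    set ν' : A := ⟨ν, hν⟩ with hν'
    have hq1 : (QuotientGroup.mk ν' : A ⧸ S) ≠ 1 := by
      rw [Ne, QuotientGroup.eq_one_iff]
      intro hmem
      exact hνfree x (mem_stabilizer_iff.mp hmem)
    have hq2 : (QuotientGroup.mk ν' : A ⧸ S) ^ 2 = 1 := by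
      rw [← QuotientGroup.mk_pow, pow_two]
      have : ν' * ν' = 1 := Subtype.ext hν2
      rw [this, QuotientGroup.mk_one]
    have ho : orderOf (QuotientGroup.mk ν' : A ⧸ S) = 2 :=
      orderOf_eq_prime hq2 hq1
    have hdvd : 2 ∣ Nat.card (A ⧸ S) := ho ▸ orderOf_dvd_natCard _
    have he : f ω = Nat.card (A ⧸ S) :=
      Nat.card_congr (orbitEquivQuotientStabilizer A x)
    rw [he]
    exact even_iff_two_dvd.mpr hdvd
  have hpos : ∀ ω : Ω, 0 < f ω := by
    intro ω
    have : Nonempty (orbit A (Quotient.out ω)) := ⟨⟨_, mem_orbit_self _⟩⟩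
    exact Nat.card_pos
  -- Step 3 : sum of orbit sizes
  have hsum : ∑ ω : Ω, f ω = 2 * n := by
    letI : ∀ ω : Ω, Fintype (orbit A (Quotient.out ω)) := fun ω => Fintype.ofFinite _
    have := Nat.card_congr (selfEquivSigmaOrbits A α)
    rw [hn] at this
    rw [hf]
    rw [Nat.card_eq_fintype_card, Fintype.card_sigma] at this
    simp only [Nat.card_eq_fintype_card]
    exact this.symm
  -- Step 4 : arithmetic
  have h2 : ∀ ω : Ω, f ω ≤ 2 ^ (f ω / 2) := by
    intro ω
    obtain ⟨k, hk⟩ := heven ω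
    have hk2 : f ω = 2 * k := by omega
    have hk1 : 1 ≤ k := by
      have := hpos ω; omega
    rw [hk2, Nat.mul_div_cancel_left _ (by norm_num)]
    exact two_mul_le_two_pow k hk1
  have h3 : ∑ ω : Ω, f ω / 2 = n := by
    have : 2 * ∑ ω : Ω, f ω / 2 = 2 * n := by
      rw [Finset.mul_sum, ← hsum]
      refine Finset.sum_congr rfl fun ω _ => ?_
      obtain ⟨k, hk⟩ := heven ω
      omega
    omega
  calc Nat.card A ≤ ∏ ω : Ω, f ω := h1
    _ ≤ ∏ ω : Ω, 2 ^ (f ω / 2) := Finset.prod_le_prod' fun ω _ => h2 ω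
    _ = 2 ^ (∑ ω : Ω, f ω / 2) := by rw [Finset.prod_pow_eq_pow_sum]
    _ = 2 ^ n := by rw [h3]

end WeylDAux

open WeylDAux MulAction

/-- For odd `r ≥ 3`, the maximal order of an abelian subgroup of the Weyl group
`W(D_r)` equals `2^(r-1)`. -/
theorem maximal_abelian_weylD_odd (r : ℕ) (hr : 3 ≤ r) (hodd : Odd r) :
    IsGreatest {m : ℕ | ∃ M : Subgroup (weylD r),
        (∀ a b : M, a * b = b * a) ∧ Nat.card M = m} (2 ^ (r - 1)) := by
  classical
  constructor
  · exact ⟨evenDiag r, evenDiag_comm r, card_evenDiag r hr hodd⟩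
  · rintro m ⟨M, hcomm, rfl⟩
    set ν : Equiv.Perm (Fin r × ZMod 2) := negSwap r with hνdef
    have hν2 : ν * ν = 1 := negSwap_mul_negSwap
    have hsign : Equiv.Perm.sign ν = -1 := sign_negSwap hodd
    have hν_hyper : ν ∈ hyperoctahedral r := by
      rw [hyperoctahedral, Subgroup.mem_centralizer_iff]
      rintro g rfl
      rfl
    set f : (weylD r) →* Equiv.Perm (Fin r × ZMod 2) :=
      (hyperoctahedral r).subtype.comp (weylD r).subtype with hfdef
    have hfinj : Function.Injective f :=
      (hyperoctahedral r).subtype_injective.comp (weylD r).subtype_injective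
    set N : Subgroup (Equiv.Perm (Fin r × ZMod 2)) := M.map f with hNdef
    have hNM : Nat.card N = Nat.card M :=
      (Nat.card_congr (Subgroup.equivMapOfInjective M f hfinj).toEquiv).symm
    have hNhyper : ∀ g ∈ N, g ∈ hyperoctahedral r := by
      rintro g ⟨mg, hmg, rfl⟩
      exact ((mg : hyperoctahedral r)).2
    have hNsign : ∀ g ∈ N, Equiv.Perm.sign g = 1 := by
      rintro g ⟨mg, hmg, rfl⟩
      exact mg.2
    have hNcomm : ∀ g ∈ N, ∀ h ∈ N, g * h = h * g := by
      rintro g ⟨mg, hmg, rfl⟩ h ⟨mh, hmh, rfl⟩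
      have h' : mg * mh = mh * mg := congrArg Subtype.val (hcomm ⟨mg, hmg⟩ ⟨mh, hmh⟩)
      rw [← map_mul, ← map_mul, h']
    have hNν : ∀ g ∈ N, Commute g ν := fun g hg => (commute_negSwap (hNhyper g hg)).symm
    have hmulνν : ∀ g : Equiv.Perm (Fin r × ZMod 2), g * ν * ν = g := by
      intro g; rw [mul_assoc, hν2, mul_one]
    have hcar_hyper : ∀ g : Equiv.Perm (Fin r × ZMod 2),
        (g ∈ N ∨ g * ν ∈ N) → g ∈ hyperoctahedral r := by
      rintro g (hg | hg)
      · exact hNhyper g hg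
      · rw [← hmulνν g]
        exact (hyperoctahedral r).mul_mem (hNhyper _ hg) hν_hyper
    set A : Subgroup (Equiv.Perm (Fin r × ZMod 2)) :=
      { carrier := {g | g ∈ N ∨ g * ν ∈ N}
        one_mem' := Or.inl N.one_mem
        mul_mem' := by
          rintro g h hg hh
          rcases hg with hg | hg <;> rcases hh with hh | hh
          · exact Or.inl (N.mul_mem hg hh)
          · exact Or.inr (by rw [mul_assoc]; exact N.mul_mem hg hh)
          · refine Or.inr ?_
            have hcom : ν * h = h * ν := commute_negSwap (hNhyper h hh)
            have he : g * h * ν = (g * ν) * h := by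
              rw [mul_assoc, ← hcom, ← mul_assoc]
            rw [he]; exact N.mul_mem hg hh
          · refine Or.inl ?_
            have hcom : ν * (h * ν) = (h * ν) * ν := commute_negSwap (hNhyper _ hh)
            have he : g * h = (g * ν) * (h * ν) := by
              have : (g * ν) * (h * ν) = g * (ν * (h * ν)) := by rw [mul_assoc]
              rw [this, hcom, hmulνν h]
            rw [he]; exact N.mul_mem hg hh
        inv_mem' := by
          rintro g hg
          rcases hg with hg | hg
          · exact Or.inl (N.inv_mem hg)
          · refine Or.inr ?_
            have hginv_hyper : g⁻¹ ∈ hyperoctahedral r :=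
              (hyperoctahedral r).inv_mem (hcar_hyper g (Or.inr hg))
            have hνinv : ν⁻¹ = ν := inv_eq_of_mul_eq_one_right hν2
            have he : g⁻¹ * ν = (g * ν)⁻¹ := by
              rw [mul_inv_rev, hνinv, commute_negSwap hginv_hyper]
            rw [he]; exact N.inv_mem hg } with hAdef
    have hmemA : ∀ g : Equiv.Perm (Fin r × ZMod 2), g ∈ A ↔ (g ∈ N ∨ g * ν ∈ N) :=
      fun g => Iff.rfl
    have hAcomm' : ∀ g, (g ∈ N ∨ g * ν ∈ N) → ∀ h, (h ∈ N ∨ h * ν ∈ N) → Commute g h := by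
      rintro g (hg | hg) h (hh | hh)
      · exact hNcomm g hg h hh
      · have c1 : Commute g (h * ν) := hNcomm g hg _ hh
        have c2 : Commute g ν := hNν g hg
        have := c1.mul_right c2
        rwa [hmulνν] at this
      · have c1 : Commute (g * ν) h := hNcomm _ hg h hh
        have c2 : Commute ν h := (hNν h hh).symm
        have := c1.mul_left c2
        rwa [hmulνν] at this
      · have c0 : Commute (g * ν) (h * ν) := hNcomm _ hg _ hh
        have cX : Commute (g * ν) ((h * ν) * ν) := c0.mul_right (hNν _ hg)
        have cY : Commute ν ((h * ν) * ν) :=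
          ((hNν _ hh).symm).mul_right (Commute.refl ν)
        have := Commute.mul_left cX cY
        rwa [hmulνν, hmulνν] at this
    have hAcomm : ∀ a b : A, a * b = b * a := fun a b =>
      Subtype.ext (hAcomm' _ a.2 _ b.2)
    have hνA : ν ∈ A := by
      refine Or.inr ?_
      rw [hν2]
      exact N.one_mem
    have hνfree : ∀ x : Fin r × ZMod 2, ν x ≠ x := by
      rintro ⟨i, c⟩ hx
      have h2 := congrArg Prod.snd hx
      have : ∀ c : ZMod 2, 1 + c ≠ c := by decide
      exact this c h2
    have hcardα : Nat.card (Fin r × ZMod 2) = 2 * r := by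
      rw [Nat.card_eq_fintype_card, Fintype.card_prod, Fintype.card_fin, ZMod.card]
      ring
    have hAle : Nat.card A ≤ 2 ^ r :=
      abelian_card_le_two_pow A hAcomm ν hνA hν2 hνfree r hcardα
    have hmem_of : ∀ g : Equiv.Perm (Fin r × ZMod 2), (g ∈ N ∨ g * ν ∈ N) → g ∈ A :=
      fun g hg => hg
    -- injection N × Bool → A
    have hinj : Function.Injective (fun p : N × Bool =>
        (⟨(p.1 : Equiv.Perm (Fin r × ZMod 2)) * (cond p.2 ν 1), by
          rcases p with ⟨n, b⟩
          refine hmem_of _ ?_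
          cases b
          · refine Or.inl ?_
            show (n : Equiv.Perm (Fin r × ZMod 2)) * 1 ∈ N
            rw [mul_one]
            exact n.2
          · refine Or.inr ?_
            show (n : Equiv.Perm (Fin r × ZMod 2)) * ν * ν ∈ N
            rw [hmulνν]
            exact n.2⟩ : A)) := by
      rintro ⟨n1, b1⟩ ⟨n2, b2⟩ h
      have hval : (n1 : Equiv.Perm (Fin r × ZMod 2)) * (cond b1 ν 1)
          = (n2 : Equiv.Perm (Fin r × ZMod 2)) * (cond b2 ν 1) :=
        congrArg Subtype.val h
      have hsg := congrArg Equiv.Perm.sign hval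
      rw [map_mul, map_mul, hNsign _ n1.2, hNsign _ n2.2, one_mul, one_mul] at hsg
      have hb : b1 = b2 := by
        cases b1 <;> cases b2 <;> first
          | rfl
          | (exfalso
             simp only [cond, map_one, hsign] at hsg
             exact absurd hsg (by decide))
      subst hb
      have hn : (n1 : Equiv.Perm (Fin r × ZMod 2)) = n2 := mul_right_cancel hval
      exact Prod.ext (Subtype.ext hn) rfl
    have hcount : Nat.card N * 2 ≤ Nat.card A := by
      have := Nat.card_le_card_of_injective _ hinj
      rwa [Nat.card_prod, Nat.card_eq_fintype_card (α := Bool), Fintype.card_bool] at this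
    have hre : 2 ^ r = 2 ^ (r - 1) * 2 := by
      conv_lhs => rw [← Nat.sub_add_cancel (by omega : 1 ≤ r)]
      rw [pow_succ]
    rw [← hNM]
    omega
end
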